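/- arXiv:2104.03079 — 8 statements merged into one kernel-verified Lean document; each statement's English description precedes it below -/
import Mathlib

section
/- Let R be a generalized vertical sum of finite posets P and Q (on disjoint carriers X and Y), with an up-set B⁻ of P, a down-set B⁺ of Q, S⁻ = P restricted to B⁻, S⁺ = Q restricted to B⁺, and a map σ : D(S⁺) → P(B⁻) satisfying σ(T) ⊆ X ∩ ↓_R T ⊆ ↓_P σ(T) for all T ∈ D(S⁺). Let M be the set of minimal points of Q and let P⁺ be the subposet of R induced on X ∪ B⁺. Then for every T ∈ D(S⁺): a_T(R) = Σ_{U ∈ D(S⁻), σ(T) ⊆ U} a_U(P) + Σ_{μ=1}^{#(M∩T)} (−1)^{μ−1} Σ_{N ⊆ M∩T, #N = μ} a_{T∖N}(P⁺ ∖ ↓_{P⁺} N), where a_{T∖N}(P⁺ ∖ ↓_{P⁺} N) is the sum, over all down-sets D of the subposet P⁺ ∖ ↓_{P⁺} N with D ∩ (B⁺∖N) = T∖N, of the number of down-sets E of P⁺ ∖ ↓_{P⁺} N with E ⊆ D. -/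
/-!
A down-set of `R` meeting `Y` in `T ⊆ B⁺` lies in `P⁺`, so `a_T(R) = a_T(P⁺)`. Split the pairs
`E ⊆ D` counted there according to whether `E` meets `B⁺`. If it does not, both are down-sets of
`P`, and `D ↦ D ∩ X` identifies the admissible `D` with the down-sets of `P` containing `σ(T)`;
grouping these by their trace on `B⁻` gives the first sum. Otherwise a minimal point of `E ∩ B⁺`
is a minimal point of `Q` lying in `T`, so inclusion–exclusion over `N ⊆ M ∩ T` counts these pairs
through the pairs with `N ⊆ E`; removing the down-set `↓N` turns those into the pairs counted by
`a_{T∖N}(P⁺ ∖ ↓N)`.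
-/

attribute [local instance] Classical.propDecidable

variable {α : Type*} [Fintype α] [PartialOrder α]

/-- The down-sets of the subposet of `α` induced on the carrier `C`. -/
noncomputable def dsOn (C : Finset α) : Finset (Finset α) :=
  Finset.univ.filter fun D => D ⊆ C ∧ ∀ a ∈ C, ∀ b ∈ D, a ≤ b → a ∈ D

/-- `aCoef C Yp T` is the sum, over all down-sets `D` of the subposet induced on `C`
with `D ∩ Yp = T`, of the number of down-sets `E` of that subposet with `E ⊆ D`. -/
noncomputable def aCoef (C Yp T : Finset α) : ℕ :=
  ∑ D ∈ (dsOn C).filter (fun D => D ∩ Yp = T),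
    ((dsOn C).filter fun E => E ⊆ D).card

/-- The down closure `↓_R S` of `S` in the ambient poset. -/
noncomputable def dcl (S : Finset α) : Finset α :=
  Finset.univ.filter fun a => ∃ b ∈ S, a ≤ b

/-- The down closure of `S` within the subposet induced on the carrier `C`. -/
noncomputable def dclOn (C S : Finset α) : Finset α :=
  C.filter fun a => ∃ b ∈ S, b ∈ C ∧ a ≤ b

open Finset

theorem sum_Icc_neg_one_pow_sum_powersetCard {β : Type*} (S : Finset β) (f : Finset β → ℤ) :
    ∑ μ ∈ Icc 1 #S, (-1 : ℤ) ^ (μ - 1) * ∑ N ∈ S.powerset.filter (fun N => #N = μ), f N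
      = f ∅ - ∑ N ∈ S.powerset, (-1 : ℤ) ^ #N * f N := by
  have hsign : ∀ μ ∈ Icc 1 #S, (-1 : ℤ) ^ (μ - 1) = -(-1) ^ μ := by
    intro μ hμ
    obtain ⟨ν, rfl⟩ : ∃ ν, μ = ν + 1 := ⟨μ - 1, by grind⟩
    simp [pow_succ]
  rw [sum_powerset, range_eq_Ico, sum_eq_sum_Ico_succ_bot (Nat.succ_pos _), zero_add,
    Nat.succ_eq_add_one, Ico_add_one_right_eq_Icc,
    powersetCard_zero, sum_singleton, card_empty, pow_zero, one_mul, sub_add_eq_sub_sub, sub_self,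
    zero_sub, ← sum_neg_distrib]
  refine sum_congr rfl fun μ hμ => ?_
  rw [hsign μ hμ, ← powersetCard_eq_filter, mul_sum, ← sum_neg_distrib]
  refine sum_congr rfl fun N hN => ?_
  rw [(mem_powersetCard.1 hN).2, neg_mul]

theorem sum_powerset_neg_one_pow_mul_card_filter_subset {β : Type*} [DecidableEq β]
    (S : Finset β) (F : Finset (Finset β)) :
    ∑ N ∈ S.powerset, (-1 : ℤ) ^ #N * #(F.filter (N ⊆ ·)) = #(F.filter (Disjoint S ·)) := by
  have hpow : ∀ E : Finset β, S.powerset.filter (· ⊆ E) = (S ∩ E).powerset := by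
    intro E; ext N; simp only [mem_filter, mem_powerset, subset_inter_iff]
  simp only [card_filter, Nat.cast_sum, Nat.cast_ite, Nat.cast_one, Nat.cast_zero, mul_sum,
    mul_ite, mul_one, mul_zero]
  rw [sum_comm]
  refine sum_congr rfl fun E _ => ?_
  rw [← sum_filter, hpow, sum_powerset_neg_one_pow_card]
  simp only [disjoint_iff_inter_eq_empty]

section DownSets

variable {C C' D E F K N T Yp : Finset α}

theorem mem_dsOn : D ∈ dsOn C ↔ D ⊆ C ∧ ∀ a ∈ C, ∀ b ∈ D, a ≤ b → a ∈ D := by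
  simp [dsOn]

theorem mem_dsOn_iff_of_mem_dsOn (hC' : C' ∈ dsOn C) (hE : E ⊆ C') :
    E ∈ dsOn C ↔ E ∈ dsOn C' := by
  obtain ⟨hC'C, hC'down⟩ := mem_dsOn.1 hC'
  simp only [mem_dsOn, hE, hE.trans hC'C, true_and]
  exact ⟨fun h a ha b hb hab => h a (hC'C ha) b hb hab,
    fun h a ha b hb hab => h a (hC'down a ha b (hE hb) hab) b hb hab⟩

theorem filter_dsOn_subset_eq (hC' : C' ∈ dsOn C) (hD : D ⊆ C') :
    (dsOn C).filter (· ⊆ D) = (dsOn C').filter (· ⊆ D) := by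
  ext E
  simp only [mem_filter]
  exact ⟨fun ⟨h, hE⟩ => ⟨(mem_dsOn_iff_of_mem_dsOn hC' (hE.trans hD)).1 h, hE⟩,
    fun ⟨h, hE⟩ => ⟨(mem_dsOn_iff_of_mem_dsOn hC' (hE.trans hD)).2 h, hE⟩⟩

theorem inter_mem_dsOn (hD : D ∈ dsOn C) (hC' : C' ⊆ C) : D ∩ C' ∈ dsOn C' := by
  obtain ⟨-, hDdown⟩ := mem_dsOn.1 hD
  refine mem_dsOn.2 ⟨inter_subset_right, fun a ha b hb hab => ?_⟩
  exact mem_inter.2 ⟨hDdown a (hC' ha) b (mem_inter.1 hb).1 hab, ha⟩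

theorem union_mem_dsOn (hK : K ∈ dsOn C) (hF : F ∈ dsOn (C \ K)) : F ∪ K ∈ dsOn C := by
  obtain ⟨hKC, hKdown⟩ := mem_dsOn.1 hK
  obtain ⟨hFC, hFdown⟩ := mem_dsOn.1 hF
  refine mem_dsOn.2 ⟨union_subset (hFC.trans sdiff_subset) hKC, fun a ha b hb hab => ?_⟩
  by_cases haK : a ∈ K
  · exact mem_union_right _ haK
  rcases mem_union.1 hb with hbF | hbK
  · exact mem_union_left _ (hFdown a (mem_sdiff.2 ⟨ha, haK⟩) b hbF hab)
  · exact absurd (hKdown a ha b hbK hab) haK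

theorem sdiff_mem_dsOn (hD : D ∈ dsOn C) : D \ K ∈ dsOn (C \ K) := by
  obtain ⟨hDC, hDdown⟩ := mem_dsOn.1 hD
  refine mem_dsOn.2 ⟨sdiff_subset_sdiff hDC le_rfl, fun a ha b hb hab => ?_⟩
  exact mem_sdiff.2 ⟨hDdown a (mem_sdiff.1 ha).1 b (mem_sdiff.1 hb).1 hab, (mem_sdiff.1 ha).2⟩

theorem dclOn_mem_dsOn : dclOn C N ∈ dsOn C := by
  refine mem_dsOn.2 ⟨filter_subset _ _, fun a ha b hb hab => ?_⟩
  simp only [dclOn, mem_filter] at hb ⊢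
  obtain ⟨-, n, hn, hnC, hbn⟩ := hb
  exact ⟨ha, n, hn, hnC, hab.trans hbn⟩

theorem dclOn_subset_iff (hE : E ∈ dsOn C) (hN : N ⊆ C) : dclOn C N ⊆ E ↔ N ⊆ E := by
  refine ⟨fun hKE n hn => hKE (mem_filter.2 ⟨hN hn, n, hn, hN hn, le_rfl⟩), fun hNE x hx => ?_⟩
  obtain ⟨hxC, n, hn, -, hxn⟩ := mem_filter.1 hx
  exact (mem_dsOn.1 hE).2 x hxC n (hNE hn) hxn

theorem sum_filter_dsOn_sdiff {M : Type*} [AddCommMonoid M] (hK : K ∈ dsOn C)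
    (p : Finset α → Prop) [DecidablePred p] (f : Finset α → M) :
    ∑ F ∈ (dsOn (C \ K)).filter p, f F
      = ∑ E ∈ (dsOn C).filter (fun E => K ⊆ E ∧ p (E \ K)), f (E \ K) := by
  have hcancel : ∀ F ∈ (dsOn (C \ K)).filter p, (F ∪ K) \ K = F := fun F hF =>
    union_sdiff_cancel_right
      (disjoint_of_subset_left (mem_dsOn.1 (mem_filter.1 hF).1).1 disjoint_sdiff_self_left)
  refine sum_nbij' (· ∪ K) (· \ K) (fun F hF => ?_) (fun E hE => ?_) hcancel
    (fun E hE => sdiff_union_of_subset (mem_filter.1 hE).2.1) (fun F hF => by rw [hcancel F hF])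
  · refine mem_filter.2 ⟨union_mem_dsOn hK (mem_filter.1 hF).1, subset_union_right, ?_⟩
    exact (hcancel F hF).symm ▸ (mem_filter.1 hF).2
  · obtain ⟨hE, -, hpE⟩ := mem_filter.1 hE
    exact mem_filter.2 ⟨sdiff_mem_dsOn hE, hpE⟩

theorem aCoef_sdiff (hK : K ∈ dsOn C) (hTY : T ⊆ Yp) (hKT : K ∩ Yp ⊆ T) :
    aCoef (C \ K) (Yp \ K) (T \ K)
      = ∑ D ∈ (dsOn C).filter (fun D => D ∩ Yp = T ∧ K ⊆ D),
          #(((dsOn C).filter (· ⊆ D)).filter (K ⊆ ·)) := by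
  rw [aCoef, sum_filter_dsOn_sdiff hK]
  refine sum_congr (filter_congr fun D _ => ?_) fun D hD => ?_
  · simp only [subset_iff, Finset.ext_iff, mem_inter, mem_sdiff] at hTY hKT ⊢
    grind
  · have hKD := (mem_filter.1 hD).2.2
    rw [card_eq_sum_ones, sum_filter_dsOn_sdiff hK, ← card_eq_sum_ones, filter_filter]
    congr 1
    refine filter_congr fun E _ => ?_
    simp only [subset_iff, mem_sdiff] at hKD ⊢
    grind

theorem aCoef_eq_of_mem_dsOn {Yp' : Finset α} (hC' : C' ∈ dsOn C)
    (hJ : ∀ D ⊆ C, D ∩ Yp = T ↔ D ⊆ C' ∧ D ∩ Yp' = T) : aCoef C Yp T = aCoef C' Yp' T := by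
  have hfam : (dsOn C).filter (· ∩ Yp = T) = (dsOn C').filter (· ∩ Yp' = T) := by
    ext D
    simp only [mem_filter]
    constructor
    · rintro ⟨hD, hDT⟩
      obtain ⟨hDC', hDT'⟩ := (hJ D (mem_dsOn.1 hD).1).1 hDT
      exact ⟨(mem_dsOn_iff_of_mem_dsOn hC' hDC').1 hD, hDT'⟩
    · rintro ⟨hD, hDT'⟩
      have hDC' := (mem_dsOn.1 hD).1
      exact ⟨(mem_dsOn_iff_of_mem_dsOn hC' hDC').2 hD,
        (hJ D (hDC'.trans (mem_dsOn.1 hC').1)).2 ⟨hDC', hDT'⟩⟩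
  rw [aCoef, aCoef, hfam]
  exact sum_congr rfl fun D hD =>
    congrArg card (filter_dsOn_subset_eq hC' (mem_dsOn.1 (mem_filter.1 hD).1).1)

end DownSets

section VerticalSum

variable {X Y B C D E N S T : Finset α}

theorem mem_dsOn_univ_of_gvs (hXY : Disjoint X Y)
    (hgvs : ∀ a b : α, a ≤ b → (a ∈ X ∧ b ∈ X) ∨ (a ∈ Y ∧ b ∈ Y) ∨ (a ∈ X ∧ b ∈ Y)) :
    X ∈ dsOn univ := by
  refine mem_dsOn.2 ⟨subset_univ X, fun a _ b hb hab => ?_⟩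
  rcases hgvs a b hab with ⟨ha, -⟩ | ⟨-, hbY⟩ | ⟨ha, -⟩
  · exact ha
  · exact absurd hbY (disjoint_left.1 hXY hb)
  · exact ha

theorem union_mem_dsOn_univ (hcover : X ∪ Y = univ) (hX : X ∈ dsOn univ) (hB : B ∈ dsOn Y) :
    X ∪ B ∈ dsOn univ := by
  refine mem_dsOn.2 ⟨subset_univ _, fun a _ b hb hab => ?_⟩
  rcases mem_union.1 hb with hbX | hbB
  · exact mem_union_left _ ((mem_dsOn.1 hX).2 a (mem_univ a) b hbX hab)
  · have ha : a ∈ X ∪ Y := hcover ▸ mem_univ a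
    rcases mem_union.1 ha with haX | haY
    · exact mem_union_left _ haX
    · exact mem_union_right _ ((mem_dsOn.1 hB).2 a haY b hbB hab)

theorem aCoef_univ_eq_aCoef_union (hXY : Disjoint X Y) (hcover : X ∪ Y = univ)
    (hC : X ∪ B ∈ dsOn univ) (hBY : B ⊆ Y) (hTB : T ⊆ B) :
    aCoef univ Y T = aCoef (X ∪ B) B T := by
  refine aCoef_eq_of_mem_dsOn hC fun D _ => ?_
  simp only [subset_iff, Finset.ext_iff, mem_inter, mem_union, disjoint_left, mem_univ]
    at hXY hcover hBY hTB ⊢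
  grind

theorem filter_dsOn_union_disjoint_eq (hXB : Disjoint X B) (hX : X ∈ dsOn (X ∪ B)) :
    (dsOn (X ∪ B)).filter (fun E => E ⊆ D ∧ Disjoint B E) = (dsOn X).filter (· ⊆ D ∩ X) := by
  rw [← filter_dsOn_subset_eq hX inter_subset_right]
  refine filter_congr fun E hE => ?_
  have hEXB := (mem_dsOn.1 hE).1
  rw [subset_inter_iff]
  exact and_congr_right fun _ =>
    ⟨fun h => h.symm.left_le_of_le_sup_right hEXB, fun h => disjoint_of_subset_right h hXB.symm⟩

theorem sum_filter_dsOn_union_inter {M : Type*} [AddCommMonoid M] (hXB : Disjoint X B)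
    (hX : X ∈ dsOn (X ∪ B)) (hT : T ∈ dsOn B) (hSX : S ⊆ X ∩ dcl T) (hXS : X ∩ dcl T ⊆ dclOn X S)
    (f : Finset α → M) :
    ∑ D ∈ (dsOn (X ∪ B)).filter (· ∩ B = T), f (D ∩ X) = ∑ A ∈ (dsOn X).filter (S ⊆ ·), f A := by
  obtain ⟨hTB, hTdown⟩ := mem_dsOn.1 hT
  refine sum_nbij' (· ∩ X) (· ∪ T) (fun D hD => ?_) (fun A hA => ?_) (fun D hD => ?_)
    (fun A hA => ?_) (fun _ _ => rfl)
  · obtain ⟨hD, hDT⟩ := mem_filter.1 hD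
    refine mem_filter.2 ⟨inter_mem_dsOn hD subset_union_left, fun x hxS => ?_⟩
    obtain ⟨hxX, hxT⟩ := mem_inter.1 (hSX hxS)
    obtain ⟨b, hbT, hxb⟩ := (mem_filter.1 hxT).2
    have hbD : b ∈ D := (mem_inter.1 (hDT.symm ▸ hbT : b ∈ D ∩ B)).1
    exact mem_inter.2 ⟨(mem_dsOn.1 hD).2 x (mem_union_left _ hxX) b hbD hxb, hxX⟩
  · obtain ⟨hA, hSA⟩ := mem_filter.1 hA
    obtain ⟨hAX, hAdown⟩ := mem_dsOn.1 hA
    have hdown : ∀ a ∈ X ∪ B, ∀ b ∈ A ∪ T, a ≤ b → a ∈ A ∪ T := by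
      intro a ha b hb hab
      rcases mem_union.1 hb with hbA | hbT
      · exact mem_union_left _
          (hAdown a ((mem_dsOn.1 hX).2 a ha b (hAX hbA) hab) b hbA hab)
      rcases mem_union.1 ha with haX | haB
      · obtain ⟨-, c, hcS, -, hac⟩ :=
          mem_filter.1 (hXS (mem_inter.2 ⟨haX, mem_filter.2 ⟨mem_univ a, b, hbT, hab⟩⟩))
        exact mem_union_left _ (hAdown a haX c (hSA hcS) hac)
      · exact mem_union_right _ (hTdown a haB b hbT hab)
    refine mem_filter.2 ⟨mem_dsOn.2 ⟨union_subset_union hAX hTB, hdown⟩, ?_⟩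
    simp only [subset_iff, Finset.ext_iff, mem_inter, mem_union, disjoint_left] at hXB hAX hTB ⊢
    grind
  · have hDXB := (mem_dsOn.1 (mem_filter.1 hD).1).1
    have hDT := (mem_filter.1 hD).2
    simp only [subset_iff, Finset.ext_iff, mem_inter, mem_union] at hDXB hDT ⊢
    grind
  · have hAX := (mem_dsOn.1 (mem_filter.1 hA).1).1
    simp only [subset_iff, Finset.ext_iff, mem_inter, mem_union, disjoint_left] at hXB hAX hTB ⊢
    grind

theorem sum_aCoef_filter_supset (hBX : B ⊆ X) (hSB : S ⊆ B) :
    ∑ U ∈ (dsOn B).filter (S ⊆ ·), aCoef X B U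
      = ∑ A ∈ (dsOn X).filter (S ⊆ ·), #((dsOn X).filter (· ⊆ A)) := by
  have hmaps : ∀ A ∈ (dsOn X).filter (S ⊆ ·), A ∩ B ∈ (dsOn B).filter (S ⊆ ·) := by
    intro A hA
    obtain ⟨hA, hSA⟩ := mem_filter.1 hA
    exact mem_filter.2 ⟨inter_mem_dsOn hA hBX, subset_inter hSA hSB⟩
  rw [← sum_fiberwise_of_maps_to hmaps]
  refine sum_congr rfl fun U hU => ?_
  rw [aCoef, filter_filter]
  refine sum_congr (filter_congr fun A _ => ?_) fun _ _ => rfl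
  refine ⟨fun h => ⟨?_, h⟩, And.right⟩
  subst h
  exact (mem_filter.1 hU).2.trans inter_subset_left

theorem disjoint_minimals_inter_iff (hB : B ∈ dsOn Y) (hBC : B ⊆ C) (hE : E ∈ dsOn C)
    (hTB : T ⊆ B) (hET : E ∩ B ⊆ T) :
    Disjoint (Y.filter (fun m => ∀ y ∈ Y, y ≤ m → y = m) ∩ T) E ↔ Disjoint B E := by
  refine ⟨fun h => ?_, disjoint_of_subset_left (inter_subset_right.trans hTB)⟩
  by_contra hBE
  obtain ⟨m, hm, hmin⟩ := (E ∩ B).exists_minimal (by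
    simpa [Finset.Nonempty, and_comm, not_disjoint_iff] using hBE)
  obtain ⟨hmE, hmB⟩ := mem_inter.1 hm
  have hmMin : ∀ y ∈ Y, y ≤ m → y = m := fun y hy hym => by
    have hyB := (mem_dsOn.1 hB).2 y hy m hmB hym
    have hyE := (mem_dsOn.1 hE).2 y (hBC hyB) m hmE hym
    exact le_antisymm hym (hmin (mem_inter.2 ⟨hyE, hyB⟩) hym)
  exact disjoint_left.1 h
    (mem_inter.2 ⟨mem_filter.2 ⟨(mem_dsOn.1 hB).1 hmB, hmMin⟩, hET (mem_inter.2 ⟨hmE, hmB⟩)⟩) hmE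

theorem aCoef_sdiff_dclOn (hBC : B ⊆ C) (hTB : T ⊆ B) (hNT : N ⊆ T)
    (hN : ∀ m ∈ N, ∀ y ∈ B, y ≤ m → y = m) :
    aCoef (C \ dclOn C N) (B \ N) (T \ N)
      = ∑ D ∈ (dsOn C).filter (· ∩ B = T), #(((dsOn C).filter (· ⊆ D)).filter (N ⊆ ·)) := by
  have hNC : N ⊆ C := hNT.trans (hTB.trans hBC)
  have hKB : dclOn C N ∩ B ⊆ N := fun x hx => by
    obtain ⟨-, n, hn, -, hxn⟩ := mem_filter.1 (mem_inter.1 hx).1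
    exact hN n hn x (mem_inter.1 hx).2 hxn ▸ hn
  have hNK : N ⊆ dclOn C N := fun n hn => mem_filter.2 ⟨hNC hn, n, hn, hNC hn, le_rfl⟩
  have hsdiff : ∀ Z ⊆ B, Z \ N = Z \ dclOn C N := fun Z hZ => by
    simp only [subset_iff, Finset.ext_iff, mem_inter, mem_sdiff] at hZ hKB hNK ⊢
    grind
  rw [hsdiff B subset_rfl, hsdiff T hTB, aCoef_sdiff dclOn_mem_dsOn hTB (hKB.trans hNT)]
  refine sum_congr (filter_congr fun D hD => ?_) fun D _ => ?_
  · rw [dclOn_subset_iff hD hNC, and_iff_left_iff_imp]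
    rintro rfl
    exact subset_inter_iff.1 hNT |>.1
  · exact congrArg card (filter_congr fun E hE => dclOn_subset_iff (mem_filter.1 hE).1 hNC)

theorem sum_card_filter_disjoint_minimals {Bm : Finset α} (hXB : Disjoint X B)
    (hX : X ∈ dsOn (X ∪ B)) (hB : B ∈ dsOn Y) (hT : T ∈ dsOn B) (hBmX : Bm ⊆ X) (hSBm : S ⊆ Bm)
    (hSX : S ⊆ X ∩ dcl T) (hXS : X ∩ dcl T ⊆ dclOn X S) :
    ∑ D ∈ (dsOn (X ∪ B)).filter (· ∩ B = T), #(((dsOn (X ∪ B)).filter (· ⊆ D)).filter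
        (Disjoint (Y.filter (fun m => ∀ y ∈ Y, y ≤ m → y = m) ∩ T) ·))
      = ∑ U ∈ (dsOn Bm).filter (S ⊆ ·), aCoef X Bm U := by
  have hTB := (mem_dsOn.1 hT).1
  calc _ = ∑ D ∈ (dsOn (X ∪ B)).filter (· ∩ B = T),
          #((dsOn (X ∪ B)).filter fun E => E ⊆ D ∧ Disjoint B E) := by
        refine sum_congr rfl fun D hD => ?_
        rw [filter_filter]
        refine congrArg card (filter_congr fun E hE => and_congr_right fun hED => ?_)
        refine disjoint_minimals_inter_iff hB subset_union_right hE hTB ?_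
        exact (mem_filter.1 hD).2 ▸ inter_subset_inter_right hED
    _ = ∑ D ∈ (dsOn (X ∪ B)).filter (· ∩ B = T), #((dsOn X).filter (· ⊆ D ∩ X)) := by
        simp only [filter_dsOn_union_disjoint_eq hXB hX]
    _ = ∑ A ∈ (dsOn X).filter (S ⊆ ·), #((dsOn X).filter (· ⊆ A)) :=
        sum_filter_dsOn_union_inter hXB hX hT hSX hXS fun A => #((dsOn X).filter (· ⊆ A))
    _ = _ := (sum_aCoef_filter_supset hBmX hSBm).symm

end VerticalSum

theorem stmt1_general (X Y Bm Bp : Finset α)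
    (hdisj : Disjoint X Y) (hcover : X ∪ Y = Finset.univ)
    (hgvs : ∀ a b : α, a ≤ b →
      (a ∈ X ∧ b ∈ X) ∨ (a ∈ Y ∧ b ∈ Y) ∨ (a ∈ X ∧ b ∈ Y))
    (hBmX : Bm ⊆ X)
    (hBpY : Bp ⊆ Y) (hBpDown : ∀ a ∈ Y, ∀ b ∈ Bp, a ≤ b → a ∈ Bp)
    (σ : Finset α → Finset α)
    (hσ : ∀ T ∈ dsOn Bp, σ T ⊆ Bm ∧ σ T ⊆ X ∩ dcl T ∧ X ∩ dcl T ⊆ dclOn X (σ T)) :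
    ∀ T ∈ dsOn Bp,
      (aCoef Finset.univ Y T : ℤ)
        = ∑ U ∈ (dsOn Bm).filter (fun U => σ T ⊆ U), (aCoef X Bm U : ℤ)
          + ∑ μ ∈ Finset.Icc 1 ((Y.filter (fun m => ∀ y ∈ Y, y ≤ m → y = m) ∩ T).card),
              (-1 : ℤ) ^ (μ - 1) *
                ∑ N ∈ ((Y.filter (fun m => ∀ y ∈ Y, y ≤ m → y = m) ∩ T).powerset.filter
                    fun N => N.card = μ),
                  (aCoef ((X ∪ Bp) \ dclOn (X ∪ Bp) N) (Bp \ N) (T \ N) : ℤ) := by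
  intro T hT
  obtain ⟨hσBm, hσX, hσcl⟩ := hσ T hT
  have hTBp : T ⊆ Bp := (mem_dsOn.1 hT).1
  have hBp : Bp ∈ dsOn Y := mem_dsOn.2 ⟨hBpY, hBpDown⟩
  have hX : X ∈ dsOn univ := mem_dsOn_univ_of_gvs hdisj hgvs
  have hC : X ∪ Bp ∈ dsOn univ := union_mem_dsOn_univ hcover hX hBp
  have hXC : X ∈ dsOn (X ∪ Bp) := (mem_dsOn_iff_of_mem_dsOn hC subset_union_left).1 hX
  set M := Y.filter (fun m => ∀ y ∈ Y, y ≤ m → y = m) ∩ T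
  set J := (dsOn (X ∪ Bp)).filter (· ∩ Bp = T)
  have hcount : ∀ N ∈ M.powerset, (aCoef ((X ∪ Bp) \ dclOn (X ∪ Bp) N) (Bp \ N) (T \ N) : ℤ)
      = ∑ D ∈ J, (#(((dsOn (X ∪ Bp)).filter (· ⊆ D)).filter (N ⊆ ·)) : ℤ) := by
    intro N hN
    have hNM : N ⊆ M := mem_powerset.1 hN
    rw [aCoef_sdiff_dclOn subset_union_right hTBp (hNM.trans inter_subset_right)
      fun m hm y hy => (mem_filter.1 (inter_subset_left (hNM hm))).2 y (hBpY hy)]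
    push_cast
    rfl
  have hsieve : ∑ N ∈ M.powerset,
      (-1 : ℤ) ^ #N * (aCoef ((X ∪ Bp) \ dclOn (X ∪ Bp) N) (Bp \ N) (T \ N) : ℤ)
      = ∑ D ∈ J, (#(((dsOn (X ∪ Bp)).filter (· ⊆ D)).filter (Disjoint M ·)) : ℤ) := by
    rw [sum_congr rfl fun N hN => by rw [hcount N hN]]
    simp only [mul_sum]
    rw [sum_comm]
    exact sum_congr rfl fun D _ => sum_powerset_neg_one_pow_mul_card_filter_subset M _
  have hbottom := congrArg (Nat.cast : ℕ → ℤ) <|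
    sum_card_filter_disjoint_minimals (hdisj.mono_right hBpY) hXC hBp hT hBmX hσBm hσX hσcl
  push_cast at hbottom
  rw [sum_Icc_neg_one_pow_sum_powersetCard, hsieve, hcount ∅ (empty_mem_powerset M),
    aCoef_univ_eq_aCoef_union hdisj hcover hC hBpY hTBp, aCoef, ← hbottom]
  simp only [empty_subset, filter_true, Nat.cast_sum]
  exact (add_sub_cancel _ _).symm

/-- Let `R` be a finite poset on `X ∪ Y` (here: the ambient type `α`), `X, Y` disjoint,
which is a generalized vertical sum of `P = R|X` and `Q = R|Y`; let `B⁻` be an up-set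
of `P`, `B⁺` a down-set of `Q`, `S⁻ = P|B⁻`, `S⁺ = Q|B⁺`, and
`σ : D(S⁺) → P(B⁻)` with `σ(T) ⊆ X ∩ ↓_R T ⊆ ↓_P σ(T)`.  Let `M` be the set of
minimal points of `Q` and `P⁺ = R|(X ∪ B⁺)`.  Then for every `T ∈ D(S⁺)`:
`a_T(R) = ∑_{U ∈ D(S⁻), σ(T) ⊆ U} a_U(P)`
`+ ∑_{μ=1}^{#(M∩T)} (−1)^{μ−1} ∑_{N ⊆ M∩T, #N = μ} a_{T∖N}(P⁺ ∖ ↓_{P⁺} N)`. -/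
theorem stmt1 (X Y Bm Bp : Finset α)
    (hdisj : Disjoint X Y) (hcover : X ∪ Y = Finset.univ)
    (hgvs : ∀ a b : α, a ≤ b →
      (a ∈ X ∧ b ∈ X) ∨ (a ∈ Y ∧ b ∈ Y) ∨ (a ∈ X ∧ b ∈ Y))
    (hBmX : Bm ⊆ X) (hBmUp : ∀ a ∈ Bm, ∀ b ∈ X, a ≤ b → b ∈ Bm)
    (hBpY : Bp ⊆ Y) (hBpDown : ∀ a ∈ Y, ∀ b ∈ Bp, a ≤ b → a ∈ Bp)
    (σ : Finset α → Finset α)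
    (hσ : ∀ T ∈ dsOn Bp, σ T ⊆ Bm ∧ σ T ⊆ X ∩ dcl T ∧ X ∩ dcl T ⊆ dclOn X (σ T)) :
    ∀ T ∈ dsOn Bp,
      (aCoef Finset.univ Y T : ℤ)
        = ∑ U ∈ (dsOn Bm).filter (fun U => σ T ⊆ U), (aCoef X Bm U : ℤ)
          + ∑ μ ∈ Finset.Icc 1 ((Y.filter (fun m => ∀ y ∈ Y, y ≤ m → y = m) ∩ T).card),
              (-1 : ℤ) ^ (μ - 1) *
                ∑ N ∈ ((Y.filter (fun m => ∀ y ∈ Y, y ≤ m → y = m) ∩ T).powerset.filter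
                    fun N => N.card = μ),
                  (aCoef ((X ∪ Bp) \ dclOn (X ∪ Bp) N) (Bp \ N) (T \ N) : ℤ) :=
  stmt1_general X Y Bm Bp hdisj hcover hgvs hBmX hBpY hBpDown σ hσ
end

section
/- Let R be a generalized vertical sum of finite posets P and Q (on disjoint carriers X and Y). Let Y' ∈ D(Q), Q' = Q restricted to Y', and R' = R restricted to X ∪ Y'. Then a_T(R') = a_T(R) for every T ∈ D(Q'). -/
attribute [local instance] Classical.propDecidable

variable {α : Type*} [Fintype α] [PartialOrder α]

lemma key_ds (X Y : Finset α)
    (hdisj : Disjoint X Y) (hcover : X ∪ Y = Finset.univ)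
    (hgvs : ∀ a b : α, a ≤ b →
      (a ∈ X ∧ b ∈ X) ∨ (a ∈ Y ∧ b ∈ Y) ∨ (a ∈ X ∧ b ∈ Y))
    (Y' : Finset α) (hY' : Y' ∈ dsOn Y)
    (D : Finset α) (hD : D ⊆ X ∪ Y') :
    D ∈ dsOn (X ∪ Y') ↔ D ∈ dsOn Finset.univ := by
  obtain ⟨hY'Y, hY'ds⟩ : Y' ⊆ Y ∧ ∀ a ∈ Y, ∀ b ∈ Y', a ≤ b → a ∈ Y' := by
    simpa [dsOn] using hY'
  simp only [dsOn, Finset.mem_filter, Finset.mem_univ, true_and]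
  constructor
  · rintro ⟨-, h⟩
    refine ⟨Finset.subset_univ _, fun a _ b hb hab => ?_⟩
    by_cases haXY : a ∈ X ∪ Y'
    · exact h a haXY b hb hab
    · exfalso
      have haX : a ∉ X := fun hX => haXY (Finset.mem_union_left _ hX)
      have haY : a ∈ Y := by
        have h1 : a ∈ X ∪ Y := by rw [hcover]; exact Finset.mem_univ a
        rcases Finset.mem_union.1 h1 with h1 | h1
        · exact absurd h1 haX
        · exact h1
      rcases hgvs a b hab with ⟨h1, -⟩ | ⟨-, h2⟩ | ⟨h1, -⟩
      · exact haX h1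
      · have hbY' : b ∈ Y' := by
          rcases Finset.mem_union.1 (hD hb) with hbX | hbY'
          · exact absurd hbX (Finset.disjoint_right.1 hdisj h2)
          · exact hbY'
        exact haXY (Finset.mem_union_right _ (hY'ds a haY b hbY' hab))
      · exact haX h1
  · rintro ⟨-, h⟩
    exact ⟨hD, fun a _ b hb hab => h a trivial b hb hab⟩

/-- Let `R` be a finite poset on `X ∪ Y` (here: the ambient type `α`), `X, Y` disjoint,
which is a generalized vertical sum of `P = R|X` and `Q = R|Y`.  Let `Y' ∈ D(Q)`,
`Q' = Q|Y'` and `R' = R|(X ∪ Y')`.  Then `a_T(R') = a_T(R)` for every `T ∈ D(Q')`. -/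
theorem stmt6 (X Y : Finset α)
    (hdisj : Disjoint X Y) (hcover : X ∪ Y = Finset.univ)
    (hgvs : ∀ a b : α, a ≤ b →
      (a ∈ X ∧ b ∈ X) ∨ (a ∈ Y ∧ b ∈ Y) ∨ (a ∈ X ∧ b ∈ Y))
    (Y' : Finset α) (hY' : Y' ∈ dsOn Y) :
    ∀ T ∈ dsOn Y', aCoef (X ∪ Y') Y' T = aCoef Finset.univ Y T := by
  intro T hT
  have hY'Y : Y' ⊆ Y := by
    have := hY'; simp only [dsOn, Finset.mem_filter] at this; exact this.2.1
  have hTY' : T ⊆ Y' := by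
    simp only [dsOn, Finset.mem_filter] at hT; exact hT.2.1
  have hfilter : (dsOn (X ∪ Y')).filter (fun D => D ∩ Y' = T)
      = (dsOn Finset.univ).filter (fun D => D ∩ Y = T) := by
    ext D
    simp only [Finset.mem_filter]
    constructor
    · rintro ⟨hD, hDT⟩
      have hsub : D ⊆ X ∪ Y' := by
        simp only [dsOn, Finset.mem_filter] at hD; exact hD.2.1
      have hDY : D ∩ Y = D ∩ Y' := by
        apply subset_antisymm
        · intro b hb
          have hb1 := Finset.mem_inter.1 hb
          refine Finset.mem_inter.2 ⟨hb1.1, ?_⟩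
          rcases Finset.mem_union.1 (hsub hb1.1) with hbX | hbY'
          · exact absurd hbX (Finset.disjoint_right.1 hdisj hb1.2)
          · exact hbY'
        · exact Finset.inter_subset_inter (Finset.Subset.refl D) hY'Y
      exact ⟨(key_ds X Y hdisj hcover hgvs Y' hY' D hsub).1 hD, by rw [hDY, hDT]⟩
    · rintro ⟨hD, hDT⟩
      have hsub : D ⊆ X ∪ Y' := by
        intro b hb
        have hb1 : b ∈ X ∪ Y := by rw [hcover]; exact Finset.mem_univ b
        rcases Finset.mem_union.1 hb1 with hbX | hbY
        · exact Finset.mem_union_left _ hbX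
        · exact Finset.mem_union_right _
            (hTY' (hDT ▸ Finset.mem_inter.2 ⟨hb, hbY⟩))
      have hDY : D ∩ Y' = D ∩ Y := by
        apply subset_antisymm
        · exact Finset.inter_subset_inter (Finset.Subset.refl D) hY'Y
        · intro b hb
          have hb1 := Finset.mem_inter.1 hb
          exact Finset.mem_inter.2
            ⟨hb1.1, hTY' (hDT ▸ Finset.mem_inter.2 ⟨hb1.1, hb1.2⟩)⟩
      exact ⟨(key_ds X Y hdisj hcover hgvs Y' hY' D hsub).2 hD, by rw [hDY, hDT]⟩
  unfold aCoef
  rw [hfilter]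
  apply Finset.sum_congr rfl
  intro D hD
  have hD' := (Finset.mem_filter.1 hD)
  have hsub : D ⊆ X ∪ Y' := by
    intro b hb
    have hb1 : b ∈ X ∪ Y := by rw [hcover]; exact Finset.mem_univ b
    rcases Finset.mem_union.1 hb1 with hbX | hbY
    · exact Finset.mem_union_left _ hbX
    · exact Finset.mem_union_right _
        (hTY' (hD'.2 ▸ Finset.mem_inter.2 ⟨hb, hbY⟩))
  congr 1
  ext E
  simp only [Finset.mem_filter]
  constructor
  · rintro ⟨hE, hED⟩
    exact ⟨(key_ds X Y hdisj hcover hgvs Y' hY' E (hED.trans hsub)).1 hE, hED⟩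
  · rintro ⟨hE, hED⟩
    exact ⟨(key_ds X Y hdisj hcover hgvs Y' hY' E (hED.trans hsub)).2 hE, hED⟩
end

section
/- For j ∈ {0,...,k}, let a_j(k) be the sum, over all down-sets D of H(C_2,C_k) with D ∩ {(i,k) : 1 ≤ i ≤ k} = {(i,k) : 1 ≤ i ≤ j}, of the number of down-sets E of H(C_2,C_k) with E ⊆ D. Then a_0(1) = 1, a_1(1) = 2, and for every k ≥ 2: a_0(k) = a_1(k) = h(H(C_2,C_{k−1})); a_j(k) = Σ_{i=j−1}^{k−1} a_i(k−1) for every j ∈ {1,...,k−1}; and a_k(k) = 2^k. -/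
attribute [local instance] Classical.propDecidable

/-- `H(C₂,C_k)`, identified with `{(x,y) : 1 ≤ x ≤ y ≤ k}` under the componentwise
order (0-indexed via `Fin k`). -/
def Hk (k : ℕ) := {p : Fin k × Fin k // p.1 ≤ p.2}

instance (k : ℕ) : PartialOrder (Hk k) := Subtype.partialOrder _

noncomputable instance (k : ℕ) : Fintype (Hk k) :=
  Subtype.fintype _

/-- The down-sets of `H(C₂,C_k)`, as finite sets. -/
noncomputable def dsHk (k : ℕ) : Finset (Finset (Hk k)) :=
  Finset.univ.filter fun D => ∀ a b : Hk k, a ≤ b → b ∈ D → a ∈ D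

/-- The element `(i,k)` of `H(C₂,C_k)` (0-indexed: `(i, k-1)`). -/
def topEl (k : ℕ) (i : Fin k) : Hk k :=
  ⟨(i, ⟨k - 1, by have := i.isLt; omega⟩), by
    have := i.isLt; exact Fin.le_def.mpr (by simp; omega)⟩

/-- `a_j(k)`: the sum, over all down-sets `D` of `H(C₂,C_k)` with
`D ∩ {(i,k) : 1 ≤ i ≤ k} = {(i,k) : 1 ≤ i ≤ j}`, of the number of down-sets `E`
of `H(C₂,C_k)` with `E ⊆ D`. -/
noncomputable def aH (k j : ℕ) : ℕ :=
  ∑ D ∈ (dsHk k).filter (fun D => ∀ i : Fin k, (topEl k i ∈ D ↔ (i : ℕ) < j)),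
    ((dsHk k).filter fun E => E ⊆ D).card

/-!
A pair `E ⊆ D` of down-sets of a poset `P` is the same as a monotone map `f : P → Fin 3`
(`E = f⁻¹{0}`, `D = f⁻¹{0,1}`), so `a_j(k)` counts the monotone maps `f` on `H(C₂,C_k)` with
`f(i,k) ≤ 1` exactly for `i ≤ j`. Split them according to `f(1,k)`. If `f(1,k) = 0`, then `f`
vanishes on the first column `{(1,y)}`, whose complement is a copy of `H(C₂,C_{k-1})` shifted by
`(1,1)`, with top row condition `j - 1`. If `f(1,k) ≠ 0`, the top row reads `1,…,1,2,…,2`, so `f`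
is determined by its restriction to the copy `{y < k}` of `H(C₂,C_{k-1})`, which can be any
monotone map that is `≤ 1` on at least the first `j` elements of its top row; sorting these by the
exact number gives `∑_{i ≥ j} a_i(k-1)`. Hence `a_j(k) = ∑_{i ≥ j-1} a_i(k-1)`; the same
splitting gives `a_0(k) = a_1(k) = h(H(C₂,C_{k-1}))` and `a_k(k) = 2 a_{k-1}(k-1)`.
-/

open Finset

noncomputable instance {α β : Type*} [Preorder α] [Preorder β] [Fintype α] [Fintype β] :
    Fintype (α →o β) :=
  FunLike.fintype _

noncomputable def lowerFinsets (α : Type*) [Preorder α] [Fintype α] : Finset (Finset α) :=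
  {D | ∀ a b : α, a ≤ b → b ∈ D → a ∈ D}

section LowerPairs

variable {α : Type*} [Preorder α]

noncomputable def homOfLowerSets {D E : Finset α} (hD : IsLowerSet (D : Set α))
    (hE : IsLowerSet (E : Set α)) : α →o Fin 3 where
  toFun a := if a ∈ E then 0 else if a ∈ D then 1 else 2
  monotone' a b hab := by
    have hE' : b ∈ E → a ∈ E := fun hb => hE hab hb
    have hD' : b ∈ D → a ∈ D := fun hb => hD hab hb
    dsimp only
    split_ifs <;> simp_all

lemma homOfLowerSets_apply {D E : Finset α} (hD : IsLowerSet (D : Set α))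
    (hE : IsLowerSet (E : Set α)) (a : α) :
    homOfLowerSets hD hE a = if a ∈ E then 0 else if a ∈ D then 1 else 2 :=
  rfl

lemma homOfLowerSets_le_one_iff {D E : Finset α} (hD : IsLowerSet (D : Set α))
    (hE : IsLowerSet (E : Set α)) (hED : E ⊆ D) {a : α} :
    homOfLowerSets hD hE a ≤ 1 ↔ a ∈ D := by
  have := @hED a
  rw [homOfLowerSets_apply]
  split_ifs <;> simp_all

lemma homOfLowerSets_eq_zero_iff {D E : Finset α} (hD : IsLowerSet (D : Set α))
    (hE : IsLowerSet (E : Set α)) {a : α} :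
    homOfLowerSets hD hE a = 0 ↔ a ∈ E := by
  rw [homOfLowerSets_apply]
  split_ifs <;> simp_all

variable [Fintype α]

lemma mem_lowerFinsets {D : Finset α} : D ∈ lowerFinsets α ↔ IsLowerSet (D : Set α) := by
  simp only [lowerFinsets, mem_filter, mem_univ, true_and, IsLowerSet, mem_coe]
  exact ⟨fun h _ _ hba hb => h _ _ hba hb, fun h _ _ hab hb => h hab hb⟩

lemma mem_lowerPairs {p : Finset α → Prop} {q : (_ : Finset α) × Finset α} :
    q ∈ ((lowerFinsets α).filter p).sigma (fun D => (lowerFinsets α).filter (· ⊆ D)) ↔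
      IsLowerSet (q.1 : Set α) ∧ p q.1 ∧ IsLowerSet (q.2 : Set α) ∧ q.2 ⊆ q.1 := by
  simp only [mem_sigma, mem_filter, mem_lowerFinsets, and_assoc]

lemma sum_card_lowerFinsets_subset_eq_card_orderHom (p : Finset α → Prop) :
    ∑ D ∈ (lowerFinsets α).filter p, ((lowerFinsets α).filter (· ⊆ D)).card =
      #{f : α →o Fin 3 | p {a | f a ≤ 1}} := by
  rw [← card_sigma]
  symm
  refine card_bij' (fun f _ => ⟨({a | f a ≤ 1} : Finset α), ({a | f a = 0} : Finset α)⟩)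
    (fun q hq => homOfLowerSets (mem_lowerPairs.1 hq).1 (mem_lowerPairs.1 hq).2.2.1)
    ?_ ?_ ?_ ?_
  · intro f hf
    rw [mem_lowerPairs]
    refine ⟨?_, (mem_filter.1 hf).2, ?_, ?_⟩
    · intro a b hba ha
      simp only [coe_filter, mem_univ, true_and, Set.mem_ofPred_eq] at ha ⊢
      exact (f.monotone hba).trans ha
    · intro a b hba ha
      simp only [coe_filter, mem_univ, true_and, Set.mem_ofPred_eq] at ha ⊢
      exact Fin.le_zero_iff.1 (ha ▸ f.monotone hba)
    · intro a ha
      simp only [mem_filter, mem_univ, true_and] at ha ⊢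
      simp [ha]
  · intro q hq
    obtain ⟨hD, hp, hE, hED⟩ := mem_lowerPairs.1 hq
    simp only [mem_filter, mem_univ, true_and, homOfLowerSets_le_one_iff hD hE hED]
    simpa
  · intro f _
    ext a
    simp only [homOfLowerSets_apply, mem_filter, mem_univ, true_and]
    have := (f a).isLt
    split_ifs <;> omega
  · intro q hq
    obtain ⟨hD, -, hE, hED⟩ := mem_lowerPairs.1 hq
    ext a
    · simp [homOfLowerSets_le_one_iff hD hE hED]
    · simp [homOfLowerSets_eq_zero_iff hD hE]

end LowerPairs

namespace Hk

variable {k : ℕ}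

lemma le_iff {a b : Hk k} : a ≤ b ↔ (a.1.1 : ℕ) ≤ b.1.1 ∧ (a.1.2 : ℕ) ≤ b.1.2 :=
  Iff.rfl

lemma ext_val {a b : Hk k} (h₁ : (a.1.1 : ℕ) = b.1.1) (h₂ : (a.1.2 : ℕ) = b.1.2) : a = b :=
  Subtype.ext (Prod.ext (Fin.ext h₁) (Fin.ext h₂))

lemma topEl_snd (i : Fin k) : ((topEl k i).1.2 : ℕ) = k - 1 :=
  rfl

lemma le_topEl (a : Hk k) : a ≤ topEl k a.1.1 :=
  le_iff.2 ⟨le_rfl, by rw [topEl_snd]; omega⟩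

lemma topEl_mono : Monotone (topEl k) :=
  fun _ _ h => le_iff.2 ⟨h, le_rfl⟩

def castSuccEmb : Hk k ↪o Hk (k + 1) :=
  OrderEmbedding.ofMapLEIff (fun a => ⟨(a.1.1.castSucc, a.1.2.castSucc), a.2⟩) fun _ _ => Iff.rfl

def succEmb : Hk k ↪o Hk (k + 1) :=
  OrderEmbedding.ofMapLEIff (fun a => ⟨(a.1.1.succ, a.1.2.succ), Fin.succ_le_succ_iff.2 a.2⟩)
    fun _ _ => Fin.succ_le_succ_iff.and Fin.succ_le_succ_iff

lemma castSuccEmb_snd (a : Hk k) : ((castSuccEmb a).1.2 : ℕ) = a.1.2 :=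
  rfl

lemma succEmb_snd (a : Hk k) : ((succEmb a).1.2 : ℕ) = a.1.2 + 1 :=
  rfl

lemma exists_castSuccEmb_eq_iff {b : Hk (k + 1)} :
    (∃ a, castSuccEmb a = b) ↔ (b.1.2 : ℕ) < k := by
  refine ⟨fun ⟨a, ha⟩ => ha ▸ a.1.2.isLt, fun h => ?_⟩
  have := b.2
  exact ⟨⟨(⟨b.1.1, by omega⟩, ⟨b.1.2, h⟩), b.2⟩, rfl⟩

lemma exists_succEmb_eq_iff {b : Hk (k + 1)} : (∃ a, succEmb a = b) ↔ 0 < (b.1.1 : ℕ) := by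
  refine ⟨fun ⟨a, ha⟩ => ha ▸ Nat.succ_pos _, fun h => ?_⟩
  have := b.2
  have := b.1.2.isLt
  refine ⟨⟨(⟨b.1.1 - 1, by omega⟩, ⟨b.1.2 - 1, by omega⟩), Fin.mk_le_mk.2 (by omega)⟩, ?_⟩
  exact ext_val (Nat.sub_add_cancel h) (Nat.sub_add_cancel (by omega))

lemma castSuccEmb_topEl_le (i : Fin k) : castSuccEmb (topEl k i) ≤ topEl (k + 1) i.castSucc :=
  le_iff.2 ⟨le_rfl, by rw [castSuccEmb_snd, topEl_snd, topEl_snd]; omega⟩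

lemma succEmb_topEl (i : Fin k) : succEmb (topEl k i) = topEl (k + 1) i.succ :=
  ext_val rfl (by have := i.pos; rw [succEmb_snd, topEl_snd, topEl_snd]; omega)

lemma not_exists_castSuccEmb_eq_topEl (i : Fin (k + 1)) :
    ¬∃ a, castSuccEmb a = topEl (k + 1) i := by
  rw [exists_castSuccEmb_eq_iff, topEl_snd]
  omega

lemma eq_topEl_of_not_exists_castSuccEmb_eq {b : Hk (k + 1)} (hb : ¬∃ a, castSuccEmb a = b) :
    b = topEl (k + 1) b.1.1 := by
  rw [exists_castSuccEmb_eq_iff] at hb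
  exact ext_val rfl (by rw [topEl_snd]; have := b.1.2.isLt; omega)

noncomputable def extendCastSucc (g : Hk k →o Fin 3) (j : ℕ)
    (hg : ∀ i : Fin k, (i : ℕ) < j → g (topEl k i) ≤ 1) : Hk (k + 1) →o Fin 3 where
  toFun := Function.extend castSuccEmb g fun b => if (b.1.1 : ℕ) < j then 1 else 2
  monotone' b b' hbb' := by
    by_cases hb' : ∃ a', castSuccEmb a' = b'
    · obtain ⟨a', rfl⟩ := hb'
      obtain ⟨a, rfl⟩ : ∃ a, castSuccEmb a = b := exists_castSuccEmb_eq_iff.2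
        ((le_iff.1 hbb').2.trans_lt (exists_castSuccEmb_eq_iff.1 ⟨a', rfl⟩))
      rw [castSuccEmb.injective.extend_apply, castSuccEmb.injective.extend_apply]
      exact g.monotone (castSuccEmb.le_iff_le.1 hbb')
    rw [Function.extend_apply' _ _ _ hb']
    by_cases hb : ∃ a, castSuccEmb a = b
    · obtain ⟨a, rfl⟩ := hb
      rw [castSuccEmb.injective.extend_apply]
      split_ifs with hj
      · exact (g.monotone (le_topEl a)).trans (hg _ ((le_iff.1 hbb').1.trans_lt hj))
      · exact Fin.le_last _
    · rw [Function.extend_apply' _ _ _ hb]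
      have := (le_iff.1 hbb').1
      split_ifs <;> first | decide | omega

lemma extendCastSucc_castSuccEmb {g : Hk k →o Fin 3} {j : ℕ}
    (hg : ∀ i : Fin k, (i : ℕ) < j → g (topEl k i) ≤ 1) (a : Hk k) :
    extendCastSucc g j hg (castSuccEmb a) = g a :=
  castSuccEmb.injective.extend_apply g (fun b => if (b.1.1 : ℕ) < j then 1 else 2) a

lemma extendCastSucc_topEl {g : Hk k →o Fin 3} {j : ℕ}
    (hg : ∀ i : Fin k, (i : ℕ) < j → g (topEl k i) ≤ 1) (i : Fin (k + 1)) :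
    extendCastSucc g j hg (topEl (k + 1) i) = if (i : ℕ) < j then 1 else 2 :=
  Function.extend_apply' g (fun b : Hk (k + 1) => if (b.1.1 : ℕ) < j then 1 else 2) _
    (not_exists_castSuccEmb_eq_topEl i)

noncomputable def extendSucc (g : Hk k →o Fin 3) : Hk (k + 1) →o Fin 3 where
  toFun := Function.extend succEmb g fun _ => 0
  monotone' b b' hbb' := by
    by_cases hb : ∃ a, succEmb a = b
    · obtain ⟨a, rfl⟩ := hb
      obtain ⟨a', rfl⟩ : ∃ a', succEmb a' = b' :=
        exists_succEmb_eq_iff.2 ((exists_succEmb_eq_iff.1 ⟨a, rfl⟩).trans_le (le_iff.1 hbb').1)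
      rw [succEmb.injective.extend_apply, succEmb.injective.extend_apply]
      exact g.monotone (succEmb.le_iff_le.1 hbb')
    · rw [Function.extend_apply' _ _ _ hb]
      exact Fin.zero_le _

lemma extendSucc_succEmb (g : Hk k →o Fin 3) (a : Hk k) : extendSucc g (succEmb a) = g a :=
  succEmb.injective.extend_apply g (fun _ => 0) a

lemma extendSucc_of_fst_eq_zero (g : Hk k →o Fin 3) {b : Hk (k + 1)} (hb : (b.1.1 : ℕ) = 0) :
    extendSucc g b = 0 :=
  Function.extend_apply' (f := succEmb) g (fun _ => 0) b (by rw [exists_succEmb_eq_iff]; omega)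

end Hk

open Hk

noncomputable def homsTopEq (k j : ℕ) : Finset (Hk k →o Fin 3) :=
  {f | ∀ i : Fin k, f (topEl k i) ≤ 1 ↔ (i : ℕ) < j}

noncomputable def homsTopGe (k j : ℕ) : Finset (Hk k →o Fin 3) :=
  {f | ∀ i : Fin k, (i : ℕ) < j → f (topEl k i) ≤ 1}

lemma mem_homsTopEq {k j : ℕ} {f : Hk k →o Fin 3} :
    f ∈ homsTopEq k j ↔ ∀ i : Fin k, f (topEl k i) ≤ 1 ↔ (i : ℕ) < j := by
  simp [homsTopEq]

lemma mem_homsTopGe {k j : ℕ} {f : Hk k →o Fin 3} :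
    f ∈ homsTopGe k j ↔ ∀ i : Fin k, (i : ℕ) < j → f (topEl k i) ≤ 1 := by
  simp [homsTopGe]

lemma dsHk_eq_lowerFinsets (k : ℕ) : dsHk k = lowerFinsets (Hk k) :=
  rfl

lemma aH_eq_card_homsTopEq (k j : ℕ) : aH k j = #(homsTopEq k j) := by
  rw [aH, dsHk_eq_lowerFinsets]
  convert sum_card_lowerFinsets_subset_eq_card_orderHom (α := Hk k)
    (fun D => ∀ i : Fin k, topEl k i ∈ D ↔ (i : ℕ) < j) using 2
  all_goals ext; simp [homsTopEq]

lemma card_homsTopEq_succ_filter_ne_zero (k j : ℕ) :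
    #{f ∈ homsTopEq (k + 1) j | f (topEl (k + 1) 0) ≠ 0} = #(homsTopGe k j) := by
  refine card_bij' (fun f _ => f.comp castSuccEmb.toOrderHom)
    (fun g hg => extendCastSucc g j (mem_homsTopGe.1 hg)) ?_ ?_ ?_ ?_
  · intro f hf
    rw [mem_filter, mem_homsTopEq] at hf
    exact mem_homsTopGe.2 fun i hi =>
      (f.monotone (castSuccEmb_topEl_le i)).trans ((hf.1 _).2 hi)
  · intro g hg
    rw [mem_filter, mem_homsTopEq, extendCastSucc_topEl]
    refine ⟨fun i => ?_, by split_ifs <;> decide⟩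
    rw [extendCastSucc_topEl]
    split_ifs <;> simp_all
  · intro f hf
    rw [mem_filter, mem_homsTopEq] at hf
    ext b
    by_cases hb : ∃ a, castSuccEmb a = b
    · obtain ⟨a, rfl⟩ := hb
      rw [extendCastSucc_castSuccEmb]
      rfl
    · rw [eq_topEl_of_not_exists_castSuccEmb_eq hb, extendCastSucc_topEl]
      have h0 : f (topEl (k + 1) 0) ≤ f (topEl (k + 1) b.1.1) :=
        f.monotone (topEl_mono (Fin.zero_le _))
      have hb1 := hf.1 b.1.1
      have hf0 := hf.2
      split_ifs <;> omega
  · exact fun g hg =>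
      OrderHom.ext _ _ (funext (extendCastSucc_castSuccEmb (mem_homsTopGe.1 hg)))

lemma card_homsTopEq_succ_filter_eq_zero (k : ℕ) {j : ℕ} (hj : 1 ≤ j) :
    #{f ∈ homsTopEq (k + 1) j | f (topEl (k + 1) 0) = 0} = #(homsTopEq k (j - 1)) := by
  refine card_nbij' (fun f => f.comp succEmb.toOrderHom) extendSucc ?_ ?_ ?_ ?_
  · intro f hf
    rw [mem_coe, mem_filter, mem_homsTopEq] at hf
    refine mem_homsTopEq.2 fun i => ?_
    change f (succEmb (topEl k i)) ≤ 1 ↔ _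
    rw [succEmb_topEl, hf.1, Fin.val_succ]
    omega
  · intro g hg
    rw [mem_coe, mem_homsTopEq] at hg
    rw [mem_coe, mem_filter, mem_homsTopEq]
    refine ⟨fun i => ?_, extendSucc_of_fst_eq_zero g (b := topEl (k + 1) 0) rfl⟩
    cases i using Fin.cases with
    | zero =>
      rw [extendSucc_of_fst_eq_zero g (b := topEl (k + 1) 0) rfl, Fin.val_zero]
      exact iff_of_true (Fin.zero_le _) hj
    | succ i => rw [← succEmb_topEl, extendSucc_succEmb, hg i, Fin.val_succ]; omega
  · intro f hf
    rw [mem_coe, mem_filter] at hf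
    ext b
    by_cases hb : (b.1.1 : ℕ) = 0
    · rw [extendSucc_of_fst_eq_zero _ hb]
      have hb0 : b.1.1 = 0 := Fin.ext hb
      have := f.monotone (le_topEl b)
      rw [hb0, hf.2] at this
      exact congrArg Fin.val (Fin.le_zero_iff.1 this).symm
    · obtain ⟨a, rfl⟩ := exists_succEmb_eq_iff.2 (Nat.pos_of_ne_zero hb)
      rw [extendSucc_succEmb]
      rfl
  · exact fun g _ => OrderHom.ext _ _ (funext (extendSucc_succEmb g))

lemma card_homsTopEq_succ (k : ℕ) {j : ℕ} (hj : 1 ≤ j) :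
    #(homsTopEq (k + 1) j) = #(homsTopEq k (j - 1)) + #(homsTopGe k j) := by
  rw [← card_homsTopEq_succ_filter_eq_zero k hj, ← card_homsTopEq_succ_filter_ne_zero,
    card_filter_add_card_filter_not]

lemma card_homsTopEq_succ_zero (k : ℕ) : #(homsTopEq (k + 1) 0) = #(homsTopGe k 0) := by
  rw [← card_homsTopEq_succ_filter_ne_zero, filter_true_of_mem]
  intro f hf h0
  have := (mem_homsTopEq.1 hf 0).1
  rw [h0] at this
  exact Nat.not_lt_zero _ (this (Fin.zero_le _))

lemma homsTopGe_zero (k : ℕ) : homsTopGe k 0 = univ := by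
  ext f
  simp [mem_homsTopGe]

lemma homsTopGe_of_le {k j : ℕ} (h : k ≤ j) : homsTopGe k j = homsTopEq k k := by
  ext f
  simp only [mem_homsTopGe, mem_homsTopEq]
  exact forall_congr' fun i => ⟨fun hf => iff_of_true (hf (by omega)) i.isLt,
    fun hf _ => hf.2 i.isLt⟩

lemma card_homsTopGe_of_lt {k j : ℕ} (h : j < k) :
    #(homsTopGe k j) = #(homsTopEq k j) + #(homsTopGe k (j + 1)) := by
  rw [← card_filter_add_card_filter_not (s := homsTopGe k j) (fun f => f (topEl k ⟨j, h⟩) ≤ 1),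
    add_comm]
  congr 2
  · ext f
    simp only [mem_filter, mem_homsTopGe, mem_homsTopEq]
    constructor
    · rintro ⟨hf, hj⟩ i
      refine ⟨fun hi => ?_, hf i⟩
      by_contra hij
      exact hj ((f.monotone (topEl_mono (Fin.le_iff_val_le_val.2 (not_lt.1 hij)))).trans hi)
    · intro hf
      exact ⟨fun i => (hf i).2, fun hj => lt_irrefl j ((hf _).1 hj)⟩
  · ext f
    simp only [mem_filter, mem_homsTopGe]
    constructor
    · rintro ⟨hf, hj⟩ i hi
      rcases Nat.lt_succ_iff_lt_or_eq.1 hi with hi | hi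
      · exact hf i hi
      · obtain rfl : i = ⟨j, h⟩ := Fin.ext hi
        exact hj
    · intro hf
      exact ⟨fun i hi => hf i (by omega), hf _ (Nat.lt_succ_self j)⟩

lemma card_homsTopEq_succ_eq_card_homsTopGe {k j : ℕ} (hj : 1 ≤ j) (hjk : j ≤ k) :
    #(homsTopEq (k + 1) j) = #(homsTopGe k (j - 1)) := by
  rw [card_homsTopEq_succ k hj, card_homsTopGe_of_lt (j := j - 1) (by omega),
    Nat.sub_add_cancel hj]

lemma card_homsTopGe_zero (k : ℕ) : #(homsTopGe k 0) = Nat.card (Hk k →o Fin 3) := by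
  rw [homsTopGe_zero, card_univ, Nat.card_eq_fintype_card]

lemma card_homsTopGe_eq_sum {k j : ℕ} (h : j ≤ k) :
    #(homsTopGe k j) = ∑ i ∈ Icc j k, #(homsTopEq k i) := by
  induction h using Nat.decreasingInduction with
  | self => rw [homsTopGe_of_le le_rfl, Icc_self, sum_singleton]
  | of_succ j hjk ih =>
    rw [card_homsTopGe_of_lt hjk, ih, ← insert_Icc_add_one_left_eq_Icc hjk.le,
      sum_insert (by simp)]

lemma card_homsTopEq_self (k : ℕ) : #(homsTopEq k k) = 2 ^ k := by
  induction k with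
  | zero =>
    rw [← homsTopGe_of_le le_rfl, homsTopGe_zero, card_univ, pow_zero, Fintype.card_eq_one_iff]
    exact ⟨OrderHom.const _ 0, fun f => OrderHom.ext _ _ (funext fun a => a.1.1.elim0)⟩
  | succ k ih =>
    rw [card_homsTopEq_succ k (by omega), homsTopGe_of_le (by omega), Nat.add_sub_cancel, ih,
      pow_succ, mul_two]

/-- `a_0(1) = 1`, `a_1(1) = 2`, and for every `k ≥ 2`:
`a_0(k) = a_1(k) = h(H(C₂,C_{k−1}))`; `a_j(k) = ∑_{i=j−1}^{k−1} a_i(k−1)` for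
`1 ≤ j ≤ k−1`; and `a_k(k) = 2^k`. -/
theorem stmt9 :
    aH 1 0 = 1 ∧ aH 1 1 = 2 ∧
    ∀ k : ℕ, 2 ≤ k →
      aH k 0 = Nat.card (Hk (k - 1) →o Fin 3)
      ∧ aH k 1 = Nat.card (Hk (k - 1) →o Fin 3)
      ∧ (∀ j : ℕ, 1 ≤ j → j ≤ k - 1 →
          aH k j = ∑ i ∈ Finset.Icc (j - 1) (k - 1), aH (k - 1) i)
      ∧ aH k k = 2 ^ k := by
  simp only [aH_eq_card_homsTopEq]
  refine ⟨?_, card_homsTopEq_self 1, fun k hk => ?_⟩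
  · rw [card_homsTopEq_succ_zero, homsTopGe_of_le le_rfl, card_homsTopEq_self, pow_zero]
  obtain ⟨m, rfl⟩ : ∃ m, k = m + 1 := ⟨k - 1, by omega⟩
  refine ⟨?_, ?_, fun j hj hjm => ?_, card_homsTopEq_self _⟩
  · rw [card_homsTopEq_succ_zero, card_homsTopGe_zero, Nat.add_sub_cancel]
  · rw [card_homsTopEq_succ_eq_card_homsTopGe le_rfl (by omega), card_homsTopGe_zero,
      Nat.add_sub_cancel]
  · rw [Nat.add_sub_cancel] at hjm ⊢
    rw [card_homsTopEq_succ_eq_card_homsTopGe hj hjm, card_homsTopGe_eq_sum (by omega)]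
end

section
/- Define polynomials q_j^{(k)}(x) for k ≥ 1 and j ∈ {0,...,k} by: q_0^{(1)}(x) = 1, q_1^{(1)}(x) = x, and for every k ≥ 2: q_k^{(k)}(x) = x^k, q_j^{(k)}(x) = Σ_{i=j−1}^{k−1} q_i^{(k−1)}(x) for j ∈ {1,...,k−1}, and q_0^{(k)}(x) = q_1^{(k)}(x). Then for every integer k ≥ 0, q_0^{(k+1)}(x) = Σ_{i=0}^{k} [ C(k+i,k) − C(k+i,k+1) ] x^{k−i}, where C(n,m) denotes the binomial coefficient (with C(n,m) = 0 for m > n). -/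
open Polynomial

/-- The polynomials `q_j^{(k)}`: `q_0^{(1)} = 1`, `q_1^{(1)} = X`, and for `k ≥ 2`:
`q_k^{(k)} = X^k`, `q_j^{(k)} = ∑_{i=j−1}^{k−1} q_i^{(k−1)}` for `1 ≤ j ≤ k−1`, and
`q_0^{(k)} = q_1^{(k)}` (note that for `j = 0` the truncated subtraction gives
`j − 1 = 0`, so the last two clauses coincide with the single sum below). -/
noncomputable def q : ℕ → ℕ → Polynomial ℤ
  | 0, _ => 0
  | 1, 0 => 1
  | 1, 1 => Polynomial.X
  | 1, _ => 0
  | (k + 2), j =>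
      if j = k + 2 then Polynomial.X ^ (k + 2)
      else ∑ i ∈ Finset.Icc (j - 1) (k + 1), q (k + 1) i

/-- The conjectured closed form. -/
noncomputable def p (k j : ℕ) : Polynomial ℤ :=
  ∑ i ∈ Finset.range k,
    Polynomial.C (((i + (k - 1 - j)).choose i : ℤ) - ((i + (k - 1 - j)).choose k : ℤ))
      * Polynomial.X ^ (k - 1 - i)

lemma qtop (k : ℕ) : q (k + 1) (k + 1) = Polynomial.X ^ (k + 1) := by
  cases k with
  | zero => simp [q]
  | succ k => rw [q, if_pos rfl]

lemma key2 (n K T : ℕ) (hn : n ≤ K) :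
    ∑ t ∈ Finset.range (T + 1), (((n + t).choose n : ℤ) - ((n + t).choose (K + 1) : ℤ))
      = ((n + T + 1).choose (n + 1) : ℤ) - ((n + T + 1).choose (K + 2) : ℤ) := by
  induction T with
  | zero =>
      rw [Finset.sum_range_one, Nat.add_zero, Nat.choose_self,
        Nat.choose_eq_zero_of_lt (show n < K + 1 by omega), Nat.add_zero, Nat.choose_self,
        Nat.choose_eq_zero_of_lt (show n + 1 < K + 2 by omega)]
  | succ T ih =>
      rw [Finset.sum_range_succ, ih]
      have h1 : (n + (T + 1) + 1).choose (n + 1)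
          = (n + T + 1).choose n + (n + T + 1).choose (n + 1) := by
        rw [show n + (T + 1) + 1 = (n + T + 1) + 1 by omega]
        exact Nat.choose_succ_succ' _ _
      have h2 : (n + (T + 1) + 1).choose (K + 2)
          = (n + T + 1).choose (K + 1) + (n + T + 1).choose (K + 2) := by
        rw [show n + (T + 1) + 1 = (n + T + 1) + 1 by omega,
          show K + 2 = (K + 1) + 1 by omega]
        exact Nat.choose_succ_succ' _ _
      rw [h1, h2, show n + (T + 1) = n + T + 1 by omega]
      push_cast; ring

lemma key (k j n : ℕ) (hj : j ≤ k + 1) (hn : n ≤ k) :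
    ∑ m ∈ Finset.Icc (j - 1) k, (((n + (k - m)).choose n : ℤ) - ((n + (k - m)).choose (k + 1) : ℤ))
      = ((n + 1 + (k + 1 - j)).choose (n + 1) : ℤ)
        - ((n + 1 + (k + 1 - j)).choose (k + 2) : ℤ) := by
  have ha : j - 1 ≤ k := by omega
  have reindex :
      ∑ m ∈ Finset.Icc (j - 1) k,
          (((n + (k - m)).choose n : ℤ) - ((n + (k - m)).choose (k + 1) : ℤ))
        = ∑ t ∈ Finset.range (k - (j - 1) + 1),
            (((n + t).choose n : ℤ) - ((n + t).choose (k + 1) : ℤ)) := by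
    rw [← Finset.Ico_add_one_right_eq_Icc, Finset.sum_Ico_eq_sum_range]
    have hcard : k + 1 - (j - 1) = k - (j - 1) + 1 := by omega
    rw [hcard, ← Finset.sum_range_reflect]
    apply Finset.sum_congr rfl
    intro t ht
    simp only [Finset.mem_range] at ht
    rw [show k - (j - 1 + (k - (j - 1) + 1 - 1 - t)) = t by omega]
  rw [reindex, key2 n k (k - (j - 1)) hn]
  rcases Nat.eq_zero_or_pos j with hj0 | hj0
  · subst hj0
    have sym : (n + k + 1).choose n = (n + k + 1).choose (k + 1) := by
      rw [show n + k + 1 = n + (k + 1) by omega]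
      exact Nat.choose_symm_add
    have pas1 : (n + k + 2).choose (n + 1)
        = (n + k + 1).choose n + (n + k + 1).choose (n + 1) := by
      rw [show n + k + 2 = (n + k + 1) + 1 by omega]
      exact Nat.choose_succ_succ' _ _
    have pas2 : (n + k + 2).choose (k + 2)
        = (n + k + 1).choose (k + 1) + (n + k + 1).choose (k + 2) := by
      rw [show n + k + 2 = (n + k + 1) + 1 by omega, show k + 2 = (k + 1) + 1 by omega]
      exact Nat.choose_succ_succ' _ _
    rw [show n + (k - (0 - 1)) + 1 = n + k + 1 by omega,
      show n + 1 + (k + 1 - 0) = n + k + 2 by omega, pas1, pas2]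
    push_cast
    rw [sym]
    ring
  · rw [show n + (k - (j - 1)) + 1 = n + 1 + (k + 1 - j) by omega]

lemma p_step (k j : ℕ) (hj : j ≤ k + 1) :
    p (k + 2) j = (∑ m ∈ Finset.Icc (j - 1) k, p (k + 1) m) + Polynomial.X ^ (k + 1) := by
  have hrhs :
      (∑ m ∈ Finset.Icc (j - 1) k, p (k + 1) m)
        = ∑ n ∈ Finset.range (k + 1),
            Polynomial.C (∑ m ∈ Finset.Icc (j - 1) k,
              (((n + (k - m)).choose n : ℤ) - ((n + (k - m)).choose (k + 1) : ℤ)))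
              * Polynomial.X ^ (k - n) := by
    unfold p
    rw [Finset.sum_comm]
    apply Finset.sum_congr rfl
    intro n _
    rw [show k + 1 - 1 - n = k - n by omega, ← Finset.sum_mul, ← map_sum]
    simp only [Nat.add_sub_cancel]
  rw [hrhs]
  unfold p
  rw [Finset.sum_range_succ']
  have h0 : Polynomial.C (((0 + (k + 2 - 1 - j)).choose 0 : ℤ)
        - ((0 + (k + 2 - 1 - j)).choose (k + 2) : ℤ))
      * Polynomial.X ^ (k + 2 - 1 - 0) = Polynomial.X ^ (k + 1) := by
    rw [Nat.choose_zero_right, Nat.choose_eq_zero_of_lt (by omega)]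
    norm_num
  rw [h0]
  congr 1
  apply Finset.sum_congr rfl
  intro n hn
  simp only [Finset.mem_range] at hn
  rw [key k j n hj (by omega),
    show n + 1 + (k + 2 - 1 - j) = n + 1 + (k + 1 - j) by omega,
    show k + 2 - 1 - (n + 1) = k - n by omega]

lemma main (k : ℕ) : ∀ j ≤ k, q (k + 1) j = p (k + 1) j := by
  induction k with
  | zero =>
      intro j hj
      interval_cases j
      show q 1 0 = p 1 0
      simp [q, p]
  | succ k ih =>
      intro j hj
      have hne : j ≠ k + 2 := by omega
      rw [q, if_neg hne, Finset.sum_Icc_succ_top (by omega), qtop, p_step k j hj]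
      congr 1
      apply Finset.sum_congr rfl
      intro m hm
      simp only [Finset.mem_Icc] at hm
      exact ih m hm.2

/-- For every integer `k ≥ 0`,
`q_0^{(k+1)}(x) = ∑_{i=0}^{k} [C(k+i,k) − C(k+i,k+1)] x^{k−i}`. -/
theorem stmt10 :
    ∀ k : ℕ,
      q (k + 1) 0
        = ∑ i ∈ Finset.range (k + 1),
            Polynomial.C (((k + i).choose k : ℤ) - ((k + i).choose (k + 1) : ℤ))
              * Polynomial.X ^ (k - i) := by
  intro k
  rw [main k 0 (Nat.zero_le k)]
  unfold p
  apply Finset.sum_congr rfl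
  intro i hi
  rw [show k + 1 - 1 - 0 = k by omega, show k + 1 - 1 - i = k - i by omega]
  have h3 : (k + i).choose i = (k + i).choose k := Nat.choose_symm_add.symm
  rw [Nat.add_comm i k, h3]
end

section
/- For every integer k ≥ 1, the sum, over all down-sets D of Λ×C_k with D ∩ (Λ×{k}) = {(ℓ,k),(r,k)}, of the number of down-sets E of Λ×C_k with E ⊆ D, equals k(k+1)(k+2)(3k+5)/12. -/
attribute [local instance] Classical.propDecidable

/-- The poset `Λ`: two incomparable minimal elements `ℓ, r` below a top element `⊤`,
realized as the subposet of `C₂ × C₂` on the three elements different from the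
bottom `(0,0)`; here `⊤ = (1,1)` and `ℓ, r` are `(0,1)` and `(1,0)`. -/
abbrev Lam := {q : Fin 2 × Fin 2 // q ≠ (0, 0)}

/-- The down-sets of the product poset `Λ × C_k`, as finite sets. -/
noncomputable def dsLC (k : ℕ) : Finset (Finset (Lam × Fin k)) :=
  Finset.univ.filter fun D => ∀ a b : Lam × Fin k, a ≤ b → b ∈ D → a ∈ D

namespace Stmt13Aux

open Finset

def lE : Lam := ⟨(0,1), by decide⟩
def rE : Lam := ⟨(1,0), by decide⟩
def tE : Lam := ⟨(1,1), by decide⟩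

lemma lam_cases : ∀ q : Lam, q = lE ∨ q = rE ∨ q = tE := by decide
lemma lam_le : ∀ x y : Lam, x ≤ y → x = y ∨ y = tE := by decide

/-- Height function: a triple of heights for the three columns. -/
def ht (a b t : ℕ) (q : Lam) : ℕ := if q = tE then t else if q = lE then a else b

lemma ht_lE {a b t : ℕ} : ht a b t lE = a := by
  rw [ht, if_neg (by decide), if_pos rfl]

lemma ht_rE {a b t : ℕ} : ht a b t rE = b := by
  rw [ht, if_neg (by decide), if_neg (by decide)]

lemma ht_tE {a b t : ℕ} : ht a b t tE = t := by
  rw [ht, if_pos rfl]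

/-- The down-set with given column heights. -/
noncomputable def tS (k a b t : ℕ) : Finset (Lam × Fin k) :=
  Finset.univ.filter fun p => (p.2 : ℕ) < ht a b t p.1

lemma mem_tS {k a b t : ℕ} {p : Lam × Fin k} :
    p ∈ tS k a b t ↔ (p.2 : ℕ) < ht a b t p.1 := by
  simp [tS]

lemma ht_anti {a b t : ℕ} (hta : t ≤ a) (htb : t ≤ b) {x y : Lam} (h : x ≤ y) :
    ht a b t y ≤ ht a b t x := by
  rcases lam_le x y h with rfl | rfl
  · exact le_refl _
  · rw [ht_tE]
    rcases lam_cases x with rfl | rfl | rfl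
    · rw [ht_lE]; exact hta
    · rw [ht_rE]; exact htb
    · rw [ht_tE]

lemma tS_mem_ds {k a b t : ℕ} (hta : t ≤ a) (htb : t ≤ b) : tS k a b t ∈ dsLC k := by
  simp only [dsLC, Finset.mem_filter, Finset.mem_univ, true_and]
  intro p q hpq hq
  obtain ⟨h1, h2⟩ := Prod.le_def.mp hpq
  rw [mem_tS] at hq ⊢
  have h2' : (p.2 : ℕ) ≤ (q.2 : ℕ) := h2
  exact lt_of_le_of_lt h2' (lt_of_lt_of_le hq (ht_anti hta htb h1))

/-- Column height of a finset. -/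
noncomputable def lvl {k : ℕ} (D : Finset (Lam × Fin k)) (q : Lam) : ℕ :=
  (Finset.univ.filter fun i : Fin k => (q, i) ∈ D).card

lemma lvl_le {k : ℕ} (D : Finset (Lam × Fin k)) (q : Lam) : lvl D q ≤ k :=
  le_trans (Finset.card_filter_le _ _) (by simp)

lemma fin_initial {k : ℕ} (S : Finset (Fin k))
    (hS : ∀ i j : Fin k, i ≤ j → j ∈ S → i ∈ S) (i : Fin k) :
    i ∈ S ↔ (i : ℕ) < S.card := by
  constructor
  · intro hi
    have h1 : Finset.Iic i ⊆ S := fun j hj => hS j i (Finset.mem_Iic.mp hj) hi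
    have h2 := Finset.card_le_card h1
    rw [Fin.card_Iic] at h2
    omega
  · intro hi
    by_contra hni
    have h1 : S ⊆ Finset.Iio i := by
      intro j hj
      rw [Finset.mem_Iio]
      by_contra hji
      push_neg at hji
      exact hni (hS i j hji hj)
    have h2 := Finset.card_le_card h1
    rw [Fin.card_Iio] at h2
    omega

lemma mem_lvl {k : ℕ} {D : Finset (Lam × Fin k)} (hD : D ∈ dsLC k) (q : Lam) (i : Fin k) :
    (q, i) ∈ D ↔ (i : ℕ) < lvl D q := by
  have hD' : ∀ a b : Lam × Fin k, a ≤ b → b ∈ D → a ∈ D :=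
    (Finset.mem_filter.mp hD).2
  have h := fin_initial (Finset.univ.filter fun j : Fin k => (q, j) ∈ D)
    (fun i j hij hj => by
      simp only [Finset.mem_filter, Finset.mem_univ, true_and] at hj ⊢
      exact hD' (q, i) (q, j) (Prod.le_def.mpr ⟨le_refl _, hij⟩) hj) i
  simpa [lvl] using h

lemma card_filter_lt {k a : ℕ} (ha : a ≤ k) :
    (Finset.univ.filter fun i : Fin k => (i : ℕ) < a).card = a := by
  refine Eq.trans (Finset.card_bij (s := Finset.univ.filter fun i : Fin k => (i : ℕ) < a)
    (t := Finset.range a) (fun i _ => (i : ℕ)) ?_ ?_ ?_) (Finset.card_range a)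
  · intro i hi
    simp only [Finset.mem_filter, Finset.mem_univ, true_and] at hi
    exact Finset.mem_range.mpr hi
  · intro i₁ _ i₂ _ h
    exact Fin.ext h
  · intro j hj
    rw [Finset.mem_range] at hj
    exact ⟨⟨j, lt_of_lt_of_le hj ha⟩, by simp [hj], rfl⟩

lemma lvl_tS {k a b t : ℕ} (q : Lam) (h : ht a b t q ≤ k) :
    lvl (tS k a b t) q = ht a b t q := by
  have hset : (Finset.univ.filter fun i : Fin k => (q, i) ∈ tS k a b t)
      = Finset.univ.filter fun i : Fin k => (i : ℕ) < ht a b t q := by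
    ext i
    simp [mem_tS]
  rw [lvl, hset, card_filter_lt h]

lemma le_helper {x y k : ℕ} (hx : x ≤ k) (h : ∀ i : Fin k, (i : ℕ) < x → (i : ℕ) < y) :
    x ≤ y := by
  by_contra hc
  push_neg at hc
  have := h ⟨y, by omega⟩ (by simpa using hc)
  simp at this

lemma lvl_tE_le_lE {k : ℕ} {D : Finset (Lam × Fin k)} (hD : D ∈ dsLC k) :
    lvl D tE ≤ lvl D lE := by
  have hD' : ∀ a b : Lam × Fin k, a ≤ b → b ∈ D → a ∈ D := (Finset.mem_filter.mp hD).2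
  refine le_helper (lvl_le D tE) fun i hi => ?_
  rw [← mem_lvl hD] at hi ⊢
  have hle : lE ≤ tE := by decide
  exact hD' (lE, i) (tE, i) (Prod.le_def.mpr ⟨hle, le_refl _⟩) hi

lemma lvl_tE_le_rE {k : ℕ} {D : Finset (Lam × Fin k)} (hD : D ∈ dsLC k) :
    lvl D tE ≤ lvl D rE := by
  have hD' : ∀ a b : Lam × Fin k, a ≤ b → b ∈ D → a ∈ D := (Finset.mem_filter.mp hD).2
  refine le_helper (lvl_le D tE) fun i hi => ?_
  rw [← mem_lvl hD] at hi ⊢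
  have hle : rE ≤ tE := by decide
  exact hD' (rE, i) (tE, i) (Prod.le_def.mpr ⟨hle, le_refl _⟩) hi

lemma lvl_mono {k : ℕ} {E D : Finset (Lam × Fin k)} (hED : E ⊆ D) (q : Lam) :
    lvl E q ≤ lvl D q := by
  apply Finset.card_le_card
  intro i hi
  simp only [Finset.mem_filter, Finset.mem_univ, true_and] at hi ⊢
  exact hED hi

lemma ds_eq_tS {k : ℕ} {D : Finset (Lam × Fin k)} (hD : D ∈ dsLC k) :
    D = tS k (lvl D lE) (lvl D rE) (lvl D tE) := by
  ext p
  obtain ⟨q, i⟩ := p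
  rw [mem_lvl hD, mem_tS]
  rcases lam_cases q with rfl | rfl | rfl
  · rw [ht_lE]
  · rw [ht_rE]
  · rw [ht_tE]

lemma tS_subset_top {k a b s t : ℕ} (hst : s ≤ t) : tS k a b s ⊆ tS k k k t := by
  intro p hp
  rw [mem_tS] at hp ⊢
  rcases lam_cases p.1 with h | h | h <;> rw [h] at hp ⊢
  · rw [ht_lE]; exact p.2.isLt
  · rw [ht_rE]; exact p.2.isLt
  · rw [ht_tE] at hp ⊢; omega

lemma inner_card {k t : ℕ} (htk : t < k) :
    ((dsLC k).filter fun E => E ⊆ tS k k k t).card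
      = ∑ s ∈ Finset.range (t + 1), (k + 1 - s) * (k + 1 - s) := by
  have hcard : ((Finset.range (t + 1)).sigma
        fun s => Finset.Icc s k ×ˢ Finset.Icc s k).card
      = ((dsLC k).filter fun E => E ⊆ tS k k k t).card := by
    apply Finset.card_bij (fun (x : Σ _ : ℕ, ℕ × ℕ) _ => tS k x.2.1 x.2.2 x.1)
    · rintro ⟨s, a, b⟩ hx
      simp only [Finset.mem_sigma, Finset.mem_range, Finset.mem_product,
        Finset.mem_Icc] at hx
      obtain ⟨hs, ⟨hsa, hak⟩, hsb, hbk⟩ := hx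
      dsimp only
      exact Finset.mem_filter.mpr ⟨tS_mem_ds hsa hsb, tS_subset_top (show s ≤ t by omega)⟩
    · rintro ⟨s₁, a₁, b₁⟩ h₁ ⟨s₂, a₂, b₂⟩ h₂ heq
      simp only [Finset.mem_sigma, Finset.mem_range, Finset.mem_product,
        Finset.mem_Icc] at h₁ h₂
      obtain ⟨hs₁, ⟨hsa₁, hak₁⟩, hsb₁, hbk₁⟩ := h₁
      obtain ⟨hs₂, ⟨hsa₂, hak₂⟩, hsb₂, hbk₂⟩ := h₂
      have ea : a₁ = a₂ := by
        have h := congrArg (fun S => lvl S lE) heq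
        simp only at h
        rwa [lvl_tS lE (by rw [ht_lE]; omega), lvl_tS lE (by rw [ht_lE]; omega),
          ht_lE, ht_lE] at h
      have eb : b₁ = b₂ := by
        have h := congrArg (fun S => lvl S rE) heq
        simp only at h
        rwa [lvl_tS rE (by rw [ht_rE]; omega), lvl_tS rE (by rw [ht_rE]; omega),
          ht_rE, ht_rE] at h
      have es : s₁ = s₂ := by
        have h := congrArg (fun S => lvl S tE) heq
        simp only at h
        rwa [lvl_tS tE (by rw [ht_tE]; omega), lvl_tS tE (by rw [ht_tE]; omega),
          ht_tE, ht_tE] at h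
      subst ea; subst eb; subst es; rfl
    · intro E hE
      rw [Finset.mem_filter] at hE
      obtain ⟨hEds, hEsub⟩ := hE
      refine ⟨⟨lvl E tE, (lvl E lE, lvl E rE)⟩, ?_, (ds_eq_tS hEds).symm⟩
      have h1 : lvl E tE ≤ t := by
        have := lvl_mono hEsub tE
        rwa [lvl_tS tE (by rw [ht_tE]; omega), ht_tE] at this
      simp only [Finset.mem_sigma, Finset.mem_range, Finset.mem_product, Finset.mem_Icc]
      exact ⟨by omega, ⟨lvl_tE_le_lE hEds, lvl_le E lE⟩, lvl_tE_le_rE hEds, lvl_le E rE⟩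
  rw [← hcard, Finset.card_sigma]
  apply Finset.sum_congr rfl
  intro s _
  rw [Finset.card_product, Nat.card_Icc]

lemma outer {k : ℕ} (hk : 1 ≤ k) :
    ∑ D ∈ (dsLC k).filter (fun D =>
        D.filter (fun p => (p.2 : ℕ) = k - 1)
          = Finset.univ.filter fun p : Lam × Fin k =>
              (p.2 : ℕ) = k - 1 ∧ (p.1 : Fin 2 × Fin 2) ≠ (1, 1)),
        ((dsLC k).filter fun E => E ⊆ D).card
      = ∑ t ∈ Finset.range k, ∑ s ∈ Finset.range (t + 1), (k + 1 - s) * (k + 1 - s) := by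
  symm
  apply Finset.sum_bij (fun t _ => tS k k k t)
  · intro t ht'
    rw [Finset.mem_range] at ht'
    refine Finset.mem_filter.mpr ⟨tS_mem_ds (by omega) (by omega), ?_⟩
    ext p
    simp only [Finset.mem_filter, Finset.mem_univ, true_and, mem_tS]
    rcases lam_cases p.1 with h | h | h <;> rw [h]
    · rw [ht_lE]
      constructor
      · rintro ⟨h1, h2⟩; exact ⟨h2, by decide⟩
      · rintro ⟨h2, _⟩; exact ⟨p.2.isLt, h2⟩
    · rw [ht_rE]
      constructor
      · rintro ⟨h1, h2⟩; exact ⟨h2, by decide⟩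
      · rintro ⟨h2, _⟩; exact ⟨p.2.isLt, h2⟩
    · rw [ht_tE]
      constructor
      · rintro ⟨h1, h2⟩
        exfalso; omega
      · rintro ⟨h2, hne⟩
        exact absurd rfl hne
  · intro t₁ h₁ t₂ h₂ heq
    rw [Finset.mem_range] at h₁ h₂
    have h := congrArg (fun S => lvl S tE) heq
    rwa [lvl_tS tE (by rw [ht_tE]; omega), lvl_tS tE (by rw [ht_tE]; omega),
      ht_tE, ht_tE] at h
  · intro D hD
    rw [Finset.mem_filter] at hD
    obtain ⟨hDds, hcond⟩ := hD
    have hkm : k - 1 < k := by omega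
    have ha : lvl D lE = k := by
      have hmem : (lE, (⟨k - 1, hkm⟩ : Fin k)) ∈ D := by
        have h1 : (lE, (⟨k - 1, hkm⟩ : Fin k)) ∈ Finset.univ.filter
            fun p : Lam × Fin k => (p.2 : ℕ) = k - 1 ∧ (p.1 : Fin 2 × Fin 2) ≠ (1, 1) := by
          simp only [Finset.mem_filter, Finset.mem_univ, true_and]
          decide

        rw [← hcond] at h1
        exact (Finset.mem_filter.mp h1).1
      have h2 := (mem_lvl hDds lE ⟨k - 1, hkm⟩).mp hmem
      have h3 := lvl_le D lE
      simp only at h2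
      omega
    have hb : lvl D rE = k := by
      have hmem : (rE, (⟨k - 1, hkm⟩ : Fin k)) ∈ D := by
        have h1 : (rE, (⟨k - 1, hkm⟩ : Fin k)) ∈ Finset.univ.filter
            fun p : Lam × Fin k => (p.2 : ℕ) = k - 1 ∧ (p.1 : Fin 2 × Fin 2) ≠ (1, 1) := by
          simp only [Finset.mem_filter, Finset.mem_univ, true_and]
          decide

        rw [← hcond] at h1
        exact (Finset.mem_filter.mp h1).1
      have h2 := (mem_lvl hDds rE ⟨k - 1, hkm⟩).mp hmem
      have h3 := lvl_le D rE
      simp only at h2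
      omega
    have htlt : lvl D tE < k := by
      have hnot : (tE, (⟨k - 1, hkm⟩ : Fin k)) ∉ D := by
        intro hmem
        have h1 : (tE, (⟨k - 1, hkm⟩ : Fin k)) ∈ D.filter fun p => (p.2 : ℕ) = k - 1 :=
          Finset.mem_filter.mpr ⟨hmem, rfl⟩
        rw [hcond] at h1
        simp only [Finset.mem_filter, Finset.mem_univ, true_and] at h1
        revert h1
        simp [tE]
      have h2 := mem_lvl hDds tE ⟨k - 1, hkm⟩
      have h3 := lvl_le D tE
      simp only at h2
      rw [h2] at hnot
      omega
    refine ⟨lvl D tE, Finset.mem_range.mpr htlt, ?_⟩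
    have h4 := ds_eq_tS hDds
    rw [ha, hb] at h4
    exact h4.symm
  · intro t ht'
    rw [Finset.mem_range] at ht'
    exact (inner_card ht').symm

lemma swap (n : ℕ) (f : ℕ → ℕ) :
    ∑ t ∈ Finset.range n, ∑ s ∈ Finset.range (t + 1), f s
      = ∑ s ∈ Finset.range n, (n - s) * f s := by
  induction n with
  | zero => simp
  | succ n ih =>
    have hterm : ∀ s ∈ Finset.range (n + 1), (n + 1 - s) * f s = (n - s) * f s + f s := by
      intro s hs
      rw [Finset.mem_range] at hs
      have h : n + 1 - s = (n - s) + 1 := by omega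
      rw [h, add_mul, one_mul]
    rw [Finset.sum_range_succ, ih, Finset.sum_congr rfl hterm, Finset.sum_add_distrib,
      Finset.sum_range_succ (fun s => (n - s) * f s)]
    simp

lemma sum_reflect (k : ℕ) :
    ∑ s ∈ Finset.range k, (k - s) * ((k + 1 - s) * (k + 1 - s))
      = ∑ j ∈ Finset.range k, (j + 1) * ((j + 2) * (j + 2)) := by
  rw [← Finset.sum_range_reflect (fun s => (k - s) * ((k + 1 - s) * (k + 1 - s))) k]
  apply Finset.sum_congr rfl
  intro j hj
  rw [Finset.mem_range] at hj
  have h1 : k - (k - 1 - j) = j + 1 := by omega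
  have h2 : k + 1 - (k - 1 - j) = j + 2 := by omega
  simp only [h1, h2]

lemma closed (k : ℕ) :
    12 * ∑ j ∈ Finset.range k, (j + 1) * ((j + 2) * (j + 2))
      = k * (k + 1) * (k + 2) * (3 * k + 5) := by
  induction k with
  | zero => simp
  | succ n ih =>
    rw [Finset.sum_range_succ, Nat.mul_add, ih]
    ring

end Stmt13Aux

/-- For every integer `k ≥ 1`, the sum, over all down-sets `D` of `Λ × C_k` with
`D ∩ (Λ×{k}) = {(ℓ,k), (r,k)}` (i.e. the elements of `D` in the top level `Λ×{k}`
are exactly the two copies of the minimal points `ℓ, r` of `Λ`), of the number of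
down-sets `E` of `Λ × C_k` with `E ⊆ D`, equals `k(k+1)(k+2)(3k+5)/12`. -/
theorem stmt13 :
    ∀ k : ℕ, 1 ≤ k →
      12 * ∑ D ∈ (dsLC k).filter (fun D =>
          D.filter (fun p => (p.2 : ℕ) = k - 1)
            = Finset.univ.filter fun p : Lam × Fin k =>
                (p.2 : ℕ) = k - 1 ∧ (p.1 : Fin 2 × Fin 2) ≠ (1, 1)),
          ((dsLC k).filter fun E => E ⊆ D).card
        = k * (k + 1) * (k + 2) * (3 * k + 5) := by
  intro k hk
  rw [Stmt13Aux.outer hk, Stmt13Aux.swap k fun s => (k + 1 - s) * (k + 1 - s)]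
  rw [show (∑ s ∈ Finset.range k, (k - s) * ((k + 1 - s) * (k + 1 - s)))
      = ∑ j ∈ Finset.range k, (j + 1) * ((j + 2) * (j + 2)) from Stmt13Aux.sum_reflect k]
  exact Stmt13Aux.closed k
end

section
/- For every integer k ≥ 2, the number of down-sets of ◊×C_k equals the number of down-sets of ◊×C_{k−1} plus the number of down-sets of Λ×C_k. -/
/-- The diamond poset `◊ = C₂ × C₂`. -/
abbrev Diamond := Fin 2 × Fin 2

namespace LowerSet

variable {α : Type*} [Preorder α]

def notMemEquiv (a : α) : {s : LowerSet α // a ∉ s} ≃ LowerSet {x // ¬a ≤ x} where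
  toFun s := ⟨Subtype.val ⁻¹' s.1, s.1.lower.preimage fun _ _ h ↦ h⟩
  invFun t := ⟨⟨Subtype.val '' (t : Set {x // ¬a ≤ x}), by
      rintro _ y hyx ⟨x, hx, rfl⟩
      exact ⟨⟨y, fun hay ↦ x.2 (hay.trans hyx)⟩, t.lower hyx hx, rfl⟩⟩,
    fun ⟨x, _, hxa⟩ ↦ x.2 hxa.ge⟩
  left_inv s := Subtype.ext <| SetLike.coe_injective <| (Subtype.image_preimage_coe _ _).trans <|
    Set.inter_eq_right.2 fun _ hx hax ↦ s.2 (s.1.lower hax hx)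
  right_inv t := SetLike.coe_injective <| Set.preimage_image_eq _ Subtype.val_injective

def memEquiv (a : α) : {s : LowerSet α // a ∈ s} ≃ LowerSet {x // ¬x ≤ a} where
  toFun s := ⟨Subtype.val ⁻¹' s.1, s.1.lower.preimage fun _ _ h ↦ h⟩
  invFun t := ⟨⟨Set.Iic a ∪ Subtype.val '' (t : Set {x // ¬x ≤ a}), by
      rintro x y hyx (hxa | ⟨x, hx, rfl⟩)
      · exact Or.inl (hyx.trans hxa)
      · by_cases hya : y ≤ a
        · exact Or.inl hya
        · exact Or.inr ⟨⟨y, hya⟩, t.lower hyx hx, rfl⟩⟩,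
    Or.inl le_rfl⟩
  left_inv s := by
    ext x
    by_cases hxa : x ≤ a
    · simpa [hxa] using s.1.lower hxa s.2
    · simp [hxa]
  right_inv t := by
    ext x
    change (x : α) ∈ Set.Iic a ∪ _ ↔ _
    simp [x.2]

open Classical in
noncomputable def equivSum (a : α) :
    LowerSet α ≃ LowerSet {x // ¬x ≤ a} ⊕ LowerSet {x // ¬a ≤ x} :=
  (Equiv.sumCompl (a ∈ ·)).symm.trans ((memEquiv a).sumCongr (notMemEquiv a))

end LowerSet

theorem Nat.card_lowerSet_eq_add {α : Type*} [Preorder α] [Finite α] (a : α) :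
    Nat.card (LowerSet α) =
      Nat.card (LowerSet {x // ¬x ≤ a}) + Nat.card (LowerSet {x // ¬a ≤ x}) := by
  rw [← Nat.card_sum]
  exact Nat.card_congr (LowerSet.equivSum a)

namespace OrderIso

def subtypeProdNotLeBotTop {P Q : Type*} [PartialOrder P] [OrderBot P] [LE Q] [OrderTop Q] :
    {x : P × Q // ¬x ≤ (⊥, ⊤)} ≃o {p : P // p ≠ ⊥} × Q where
  toFun x := (⟨x.1.1, fun h ↦ x.2 ⟨h.le, le_top⟩⟩, x.1.2)
  invFun y := ⟨(y.1, y.2), fun h ↦ y.1.2 (le_bot_iff.1 h.1)⟩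
  left_inv _ := rfl
  right_inv _ := rfl
  map_rel_iff' := Iff.rfl

def subtypeProdNotBotTopLe (P : Type*) [LE P] [OrderBot P] (n : ℕ) :
    {x : P × Fin (n + 1) // ¬(⊥, ⊤) ≤ x} ≃o P × Fin n where
  toFun x := (x.1.1, x.1.2.castLT (Fin.val_lt_last fun h ↦ x.2 ⟨bot_le, h.ge⟩))
  invFun y := ⟨(y.1, y.2.castSucc), fun h ↦ (Fin.castSucc_lt_last y.2).not_ge h.2⟩
  left_inv _ := rfl
  right_inv _ := rfl
  map_rel_iff' := Iff.rfl

end OrderIso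

theorem Nat.card_lowerSet_prod_fin_succ (P : Type*) [PartialOrder P] [OrderBot P] [Finite P]
    (n : ℕ) :
    Nat.card (LowerSet (P × Fin (n + 1))) =
      Nat.card (LowerSet (P × Fin n)) +
        Nat.card (LowerSet ({p : P // p ≠ ⊥} × Fin (n + 1))) := by
  rw [Nat.card_lowerSet_eq_add ((⊥, ⊤) : P × Fin (n + 1)), add_comm]
  exact congr_arg₂ (· + ·)
    (Nat.card_congr (LowerSet.map (OrderIso.subtypeProdNotBotTopLe P n)).toEquiv)
    (Nat.card_congr (LowerSet.map OrderIso.subtypeProdNotLeBotTop).toEquiv)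

/-- For every integer `k ≥ 2`, the number of down-sets of `◊ × C_k` equals the number
of down-sets of `◊ × C_{k−1}` plus the number of down-sets of `Λ × C_k`. -/
theorem stmt15 :
    ∀ k : ℕ, 2 ≤ k →
      Nat.card (LowerSet (Diamond × Fin k))
        = Nat.card (LowerSet (Diamond × Fin (k - 1)))
          + Nat.card (LowerSet (Lam × Fin k)) := by
  rintro (_ | n) hk
  · omega
  · -- `Lam` is `{p : Diamond // p ≠ ⊥}` up to unfolding `⊥ = (0, 0)`
    exact Nat.card_lowerSet_prod_fin_succ Diamond n
end

section
/- The number of order homomorphisms from the product poset C_3×C_3×C_3 to the chain C_3 (equivalently, the number of monotone ternary functions of three variables) equals 211250. -/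
set_option maxRecDepth 40000
set_option maxHeartbeats 4000000

/-- multichain subtype for a preorder -/
abbrev MC (β : Type*) [Preorder β] := {t : β × β × β // t.1 ≤ t.2.1 ∧ t.2.1 ≤ t.2.2}

def multi (β : Type*) [Preorder β] : (Fin 3 →o β) ≃o MC β where
  toFun f := ⟨(f 0, f 1, f 2), f.monotone (by decide), f.monotone (by decide)⟩
  invFun t :=
    ⟨![t.1.1, t.1.2.1, t.1.2.2], by
      intro i j hij
      fin_cases i <;> fin_cases j <;>
        first
          | exact le_refl _
          | exact t.2.1
          | exact t.2.2
          | exact t.2.1.trans t.2.2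
          | exact absurd hij (by decide)⟩
  left_inv f := by ext x; fin_cases x <;> rfl
  right_inv t := rfl
  map_rel_iff' {f g} := by
    constructor
    · intro h x
      fin_cases x
      · exact h.1
      · exact h.2.1
      · exact h.2.2
    · intro h
      exact ⟨h 0, h 1, h 2⟩

/-- compose with an order iso on the codomain -/
def congrCod {α X Y : Type*} [Preorder α] [Preorder X] [Preorder Y] (i : X ≃o Y) :
    (α →o X) ≃o (α →o Y) where
  toFun f := (OrderHomClass.toOrderHom i).comp f
  invFun g := (OrderHomClass.toOrderHom i.symm).comp g
  left_inv f := by ext x; simp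
  right_inv g := by ext x; simp
  map_rel_iff' {f g} := by
    constructor
    · intro h x
      exact i.le_iff_le.mp (h x)
    · intro h x
      exact i.le_iff_le.mpr (h x)

abbrev M1 := MC (Fin 3)
abbrev M2 := MC M1

def bigE : ((Fin 3 × Fin 3 × Fin 3) →o Fin 3) ≃ MC M2 :=
  OrderHom.curry.toEquiv.trans <|
    (congrCod OrderHom.curry).toEquiv.trans <|
      (congrCod (congrCod (multi (Fin 3)))).toEquiv.trans <|
        (congrCod (multi M1)).toEquiv.trans (multi M2).toEquiv

def sigE {β : Type*} [Preorder β] :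
    MC β ≃ Σ b : β, {a : β // a ≤ b} × {c : β // b ≤ c} where
  toFun t := ⟨t.1.2.1, ⟨t.1.1, t.2.1⟩, ⟨t.1.2.2, t.2.2⟩⟩
  invFun s := ⟨(s.2.1.1, s.1, s.2.2.1), s.2.1.2, s.2.2.2⟩
  left_inv _ := rfl
  right_inv _ := rfl

instance (b : M2) : DecidablePred (· ≤ b) := fun a => Subtype.decidableLE a b
instance (b : M2) : DecidablePred (b ≤ ·) := fun a => Subtype.decidableLE b a

instance : ∀ b : M2, Fintype ({a : M2 // a ≤ b} × {c : M2 // b ≤ c}) :=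
  fun _ => inferInstance

/-- The number of order homomorphisms from the product poset `C₃ × C₃ × C₃`
(chains with the componentwise order) to the chain `C₃` equals 211250. -/
theorem stmt16 : Nat.card ((Fin 3 × Fin 3 × Fin 3) →o Fin 3) = 211250 := by
  rw [Nat.card_congr (bigE.trans sigE), Nat.card_eq_fintype_card, Fintype.card_sigma]
  simp only [Fintype.card_prod]
  decide
end

section
/- For all finite posets R and Q, there is a bijection between H(R, D(Q)), the set of order homomorphisms from R to the down-set lattice of Q, and H(Q, D(R)), the set of order homomorphisms from Q to the down-set lattice of R. -/
/-!
A monotone map `f : R → D(Q)` is the same as a relation `{(r, q) | q ∈ f r}` that is down-closed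
in `q` and up-closed in `r`. Its complement is down-closed in `r` and up-closed in `q`, i.e. it is
a monotone map `Q → D(R)`, and taking complements is an involution.
-/

namespace OrderHom

variable {R Q : Type*} [Preorder R] [Preorder Q]

def lowerSetFlip (f : R →o LowerSet Q) : Q →o LowerSet R where
  toFun q := ⟨{r | q ∉ f r}, fun _ _ hrr' hr hq => hr (f.monotone hrr' hq)⟩
  monotone' _ _ hqq' _ hr hq := hr ((f _).lower hqq' hq)

@[simp]
theorem mem_lowerSetFlip (f : R →o LowerSet Q) (q : Q) (r : R) :
    r ∈ lowerSetFlip f q ↔ q ∉ f r :=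
  Iff.rfl

@[simp]
theorem lowerSetFlip_lowerSetFlip (f : R →o LowerSet Q) : lowerSetFlip (lowerSetFlip f) = f := by
  ext r q
  simp

def lowerSetFlipEquiv : (R →o LowerSet Q) ≃ (Q →o LowerSet R) where
  toFun := lowerSetFlip
  invFun := lowerSetFlip
  left_inv := lowerSetFlip_lowerSetFlip
  right_inv := lowerSetFlip_lowerSetFlip

end OrderHom

theorem stmt17_general {R Q : Type*} [PartialOrder R] [PartialOrder Q] :
    Nonempty ((R →o LowerSet Q) ≃ (Q →o LowerSet R)) :=
  ⟨OrderHom.lowerSetFlipEquiv⟩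

/-- For all finite posets `R` and `Q`, there is a bijection between the set of
order homomorphisms from `R` to the down-set lattice of `Q` and the set of order
homomorphisms from `Q` to the down-set lattice of `R`. -/
theorem stmt17 {R Q : Type*} [PartialOrder R] [PartialOrder Q] [Finite R] [Finite Q] :
    Nonempty ((R →o LowerSet Q) ≃ (Q →o LowerSet R)) :=
  stmt17_general
end
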